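/- arXiv:0901.2561 — 11 statements merged into one kernel-verified Lean document; each statement's English description precedes it below -/
import Mathlib

section
/- Every free group is residually nilpotent; that is, if F(S) is the free group on a set S, then the intersection over all k ≥ 1 of the terms γ_k(F(S)) of the lower central series is the trivial subgroup. -/
/-!
Write `x ≠ 1` in `F(S) ≅ ∗_{s ∈ S} ℤ` as a reduced word `y₁^{e₁} ⋯ y_k^{e_k}` with `eᵢ ≠ 0` and
`yᵢ ≠ yᵢ₊₁`. Let `N_y` be the `(k+1) × (k+1)` integer matrix with entry `1` at `(i, i+1)` exactly
when `yᵢ₊₁ = y`. Since consecutive syllables differ, `N_y² = 0`, so `y ↦ 1 + N_y` defines a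
representation with `y^e ↦ 1 + e N_y`, and the `(0, k)` entry of the image of `x` is
`e₁ ⋯ e_k ≠ 0`. The image consists of unitriangular matrices, and for units congruent to `1`
modulo a multiplicative filtration `F`, `γ_{n+1}` lies in level `n + 1`; for strictly upper
triangular `(k+1) × (k+1)` matrices level `k + 1` is zero, so `x ∉ γ_{k+1}(F(S))`.
-/

open scoped commutatorElement

def unitOneAdd {A : Type*} [Ring A] {a : A} (ha : a * a = 0) : Aˣ where
  val := 1 + a
  inv := 1 - a
  val_inv := by simp [add_mul, mul_sub, ha]
  inv_val := by simp [sub_mul, mul_add, ha]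

theorem val_unitOneAdd_zpow {A : Type*} [Ring A] {a : A} (ha : a * a = 0) (n : ℤ) :
    ((unitOneAdd ha ^ n : Aˣ) : A) = 1 + n • a := by
  induction n using Int.induction_on with
  | zero => simp
  | succ n ih =>
    rw [zpow_add_one, Units.val_mul, ih]
    simp only [unitOneAdd, Units.val_mk, mul_add, add_mul, one_mul, mul_one, smul_mul_assoc, ha,
      smul_zero, add_smul, one_smul]
    abel
  | pred n ih =>
    rw [zpow_sub_one, Units.val_mul, ih]
    simp only [unitOneAdd, Units.inv_mk, mul_sub, add_mul, one_mul, mul_one, smul_mul_assoc, ha,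
      smul_zero, sub_smul, one_smul]
    abel

structure IsMulFiltration {A : Type*} [Ring A] (F : ℕ → AddSubgroup A) : Prop where
  antitone : Antitone F
  mul_mem : ∀ {i j : ℕ} {a b : A}, a ∈ F i → b ∈ F j → a * b ∈ F (i + j)

namespace IsMulFiltration

variable {A : Type*} [Ring A] {F : ℕ → AddSubgroup A} (hF : IsMulFiltration F)
include hF

theorem mul_sub_one_mem {k : ℕ} {a b : A} (ha : a - 1 ∈ F k) (hb : b - 1 ∈ F k) :
    a * b - 1 ∈ F k := by
  have hab : a * b - 1 = (a - 1) * (b - 1) + (a - 1) + (b - 1) := by noncomm_ring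
  rw [hab]
  exact add_mem (add_mem (hF.antitone (Nat.le_add_left k k) (hF.mul_mem ha hb)) ha) hb

-- The condition on `u⁻¹` does not follow from the one on `u`, since `F 0` need not contain `u⁻¹`.
def congrUnits (k : ℕ) : Subgroup Aˣ where
  carrier := {u | (u : A) - 1 ∈ F k ∧ ((u⁻¹ : Aˣ) : A) - 1 ∈ F k}
  one_mem' := by simp
  mul_mem' := fun ⟨hu, hu'⟩ ⟨hv, hv'⟩ => by
    refine ⟨?_, ?_⟩
    · simpa using hF.mul_sub_one_mem hu hv
    · simpa using hF.mul_sub_one_mem hv' hu'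
  inv_mem' := fun ⟨hu, hu'⟩ => ⟨hu', by simpa using hu⟩

theorem val_commutatorElement_sub_one_mem {i j : ℕ} {u v : Aˣ} (hu : u ∈ hF.congrUnits i)
    (hv : v ∈ hF.congrUnits j) : ((⁅u, v⁆ : Aˣ) : A) - 1 ∈ F (i + j) := by
  obtain ⟨hu, hu'⟩ := hu
  obtain ⟨hv, hv'⟩ := hv
  have hcomm : (((u : A) - 1) * ((v : A) - 1) - ((v : A) - 1) * ((u : A) - 1)) ∈ F (i + j) :=
    sub_mem (hF.mul_mem hu hv) (add_comm j i ▸ hF.mul_mem hv hu)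
  have hinv : ((u⁻¹ : Aˣ) : A) * ((v⁻¹ : Aˣ) : A) - 1 ∈ F 0 :=
    hF.mul_sub_one_mem (hF.antitone (Nat.zero_le i) hu') (hF.antitone (Nat.zero_le j) hv')
  -- `u v u⁻¹ v⁻¹ - 1 = (u v - v u) u⁻¹ v⁻¹`, and `u v - v u = (u - 1)(v - 1) - (v - 1)(u - 1)`.
  have key : ((⁅u, v⁆ : Aˣ) : A) - 1 =
      (((u : A) - 1) * ((v : A) - 1) - ((v : A) - 1) * ((u : A) - 1)) *
        (((u⁻¹ : Aˣ) : A) * ((v⁻¹ : Aˣ) : A) - 1) +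
      (((u : A) - 1) * ((v : A) - 1) - ((v : A) - 1) * ((u : A) - 1)) := by
    have hu1 : (u : A) * ((u⁻¹ : Aˣ) : A) = 1 := u.mul_inv
    have hv1 : (v : A) * ((v⁻¹ : Aˣ) : A) = 1 := v.mul_inv
    rw [commutatorElement_def, Units.val_mul, Units.val_mul, Units.val_mul]
    calc (u : A) * v * ((u⁻¹ : Aˣ) : A) * ((v⁻¹ : Aˣ) : A) - 1
        = (u * v - v * u) * (((u⁻¹ : Aˣ) : A) * ((v⁻¹ : Aˣ) : A))
          + ((v : A) * ((u : A) * ((u⁻¹ : Aˣ) : A)) * ((v⁻¹ : Aˣ) : A) - 1) := by noncomm_ring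
      _ = _ := by rw [hu1, mul_one, hv1]; noncomm_ring
  rw [key]
  exact add_mem (by simpa using hF.mul_mem hcomm hinv) hcomm

theorem commutatorElement_mem_congrUnits {i j : ℕ} {u v : Aˣ} (hu : u ∈ hF.congrUnits i)
    (hv : v ∈ hF.congrUnits j) : ⁅u, v⁆ ∈ hF.congrUnits (i + j) :=
  ⟨hF.val_commutatorElement_sub_one_mem hu hv, by
    rw [commutatorElement_inv, add_comm]
    exact hF.val_commutatorElement_sub_one_mem hv hu⟩

theorem map_lowerCentralSeries_le_congrUnits {G : Type*} [Group G] {φ : G →* Aˣ}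
    (hφ : φ.range ≤ hF.congrUnits 1) (n : ℕ) :
    ((⊤ : Subgroup G).lowerCentralSeries n).map φ ≤ hF.congrUnits (n + 1) := by
  induction n with
  | zero => simpa [← MonoidHom.range_eq_map] using hφ
  | succ n ih =>
    rw [Subgroup.lowerCentralSeries_succ, Subgroup.map_commutator, ← MonoidHom.range_eq_map,
      Subgroup.commutator_le]
    exact fun u hu v hv => hF.commutatorElement_mem_congrUnits (ih hu) (hφ hv)

theorem unitOneAdd_mem_congrUnits {a : A} (ha : a * a = 0) {k : ℕ} (hk : a ∈ F k) :
    unitOneAdd ha ∈ hF.congrUnits k :=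
  ⟨by simpa [unitOneAdd] using hk, by simpa [unitOneAdd] using neg_mem hk⟩

end IsMulFiltration

namespace Matrix

variable {R : Type*} [Ring R]

def upperFiltration (n k : ℕ) : AddSubgroup (Matrix (Fin n) (Fin n) R) where
  carrier := {M | ∀ i j : Fin n, (j : ℕ) < i + k → M i j = 0}
  zero_mem' := fun _ _ _ => rfl
  add_mem' := fun ha hb i j hij => by simp [ha i j hij, hb i j hij]
  neg_mem' := fun ha i j hij => by simp [ha i j hij]

theorem isMulFiltration_upperFiltration (n : ℕ) :
    IsMulFiltration (upperFiltration (R := R) n) where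
  antitone := fun _ _ hkl _ hM i j hij => hM i j (by omega)
  mul_mem := fun {i j} {a b} ha hb p q hpq => by
    rw [mul_apply]
    refine Finset.sum_eq_zero fun c _ => ?_
    by_cases h : (c : ℕ) < p + i
    · rw [ha p c h, zero_mul]
    · rw [hb c q (by omega), mul_zero]

theorem upperFiltration_eq_bot {n k : ℕ} (h : n ≤ k) : upperFiltration (R := R) n k = ⊥ :=
  eq_bot_iff.2 fun _ hM => (AddSubgroup.mem_bot).2 <| ext fun i j => hM i j (by omega)

theorem congrUnits_upperFiltration_eq_bot {n k : ℕ} (h : n ≤ k) :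
    (isMulFiltration_upperFiltration (R := R) n).congrUnits k = ⊥ :=
  eq_bot_iff.2 fun u hu => Subgroup.mem_bot.2 <| Units.ext <| sub_eq_zero.1 <| by
    simpa [upperFiltration_eq_bot h] using hu.1

variable {ι : Type*} [DecidableEq ι]

def letterShift (l : List ι) (y : ι) : Matrix (Fin (l.length + 1)) (Fin (l.length + 1)) R :=
  of fun i j => if (j : ℕ) = i + 1 ∧ l[(i : ℕ)]? = some y then 1 else 0

theorem letterShift_mem_upperFiltration (l : List ι) (y : ι) :
    letterShift (R := R) l y ∈ upperFiltration (l.length + 1) 1 := fun i j hij => by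
  simp only [letterShift, of_apply]
  rw [if_neg (by omega)]

theorem letterShift_mul_self {l : List ι} (hl : l.IsChain (· ≠ ·)) (y : ι) :
    letterShift (R := R) l y * letterShift l y = 0 := by
  ext i k
  rw [mul_apply, zero_apply]
  refine Finset.sum_eq_zero fun j _ => ?_
  simp only [letterShift, of_apply]
  split_ifs with hij hjk <;> try simp
  obtain ⟨hj, hi⟩ := hij
  obtain ⟨hk, hj'⟩ := hjk
  have hlt : (i : ℕ) + 1 < l.length := by omega
  rw [List.getElem?_eq_getElem (by omega), Option.some_inj] at hi
  rw [hj, List.getElem?_eq_getElem hlt, Option.some_inj] at hj'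
  exact (List.isChain_iff_getElem.1 hl i hlt (hi.trans hj'.symm)).elim

theorem mul_one_add_smul_letterShift_apply {l : List ι} {y : ι} {p : ℕ} (hp : l[p]? = some y)
    {M : Matrix (Fin (l.length + 1)) (Fin (l.length + 1)) R} {a : Fin (l.length + 1)}
    (hM : ∀ j : Fin (l.length + 1), p < j → M a j = 0) (c : R) :
    (∀ j : Fin (l.length + 1), p + 1 < j →
        (M * (1 + c • letterShift l y) : Matrix _ _ R) a j = 0) ∧
      (M * (1 + c • letterShift l y) : Matrix _ _ R) a ⟨p + 1, by grind⟩ =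
        M a ⟨p, by grind⟩ * c := by
  rw [mul_add, mul_one]
  simp only [add_apply, mul_apply, smul_apply, letterShift, of_apply, smul_eq_mul]
  refine ⟨fun j hj => ?_, ?_⟩
  · rw [hM j (by omega), zero_add]
    refine Finset.sum_eq_zero fun i _ => ?_
    split_ifs with h
    · rw [hM i (by omega), zero_mul]
    · rw [mul_zero, mul_zero]
  · rw [hM _ (by simp), zero_add, Finset.sum_eq_single ⟨p, by grind⟩]
    · simp [hp]
    · intro i _ hi
      rw [if_neg, mul_zero, mul_zero]
      exact fun h => hi (Fin.ext (by have := h.1; show (i : ℕ) = p; omega))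
    · simp

theorem prod_one_add_smul_letterShift_apply_zero_last {α : Type*} (L : List α) (f : α → ι)
    (c : α → R) :
    (L.map fun x => (1 + c x • letterShift (L.map f) (f x) : Matrix _ _ R)).prod 0 (Fin.last _) =
      (L.map c).prod := by
  set g := fun x => (1 + c x • letterShift (L.map f) (f x) : Matrix _ _ R)
  have key : ∀ p (hp : p ≤ L.length),
      (∀ j : Fin ((L.map f).length + 1), p < j → ((L.map g).take p).prod 0 j = 0) ∧
        ((L.map g).take p).prod 0 ⟨p, by simp; omega⟩ = ((L.map c).take p).prod := by
    intro p
    induction p with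
    | zero =>
      intro _
      refine ⟨fun j hj => ?_, by simp⟩
      simp [one_apply_ne (fun h => by simp [← h] at hj : (0 : Fin _) ≠ j)]
    | succ p ih =>
      intro hp
      have hpL : p < L.length := hp
      obtain ⟨ih₁, ih₂⟩ := ih hpL.le
      rw [List.prod_take_succ _ _ (by simpa), List.prod_take_succ _ _ (by simpa),
        List.getElem_map, List.getElem_map, ← ih₂]
      exact mul_one_add_smul_letterShift_apply (y := f L[p]) (by simp [hpL]) ih₁ _
  obtain ⟨-, h⟩ := key L.length le_rfl
  rw [List.take_of_length_le (by simp), List.take_of_length_le (by simp)] at h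
  convert h using 2
  exact Fin.ext (by simp)

end Matrix

open Monoid.CoprodI Matrix

namespace FreeGroup

variable {S : Type*} [DecidableEq S]

theorem lift_eq_prod_syllables {G : Type*} [Group G] (f : S → G) (x : FreeGroup S) :
    lift f x = ((Word.equiv (freeGroupEquivCoprodI x)).toList.map fun a =>
      f a.1 ^ freeGroupUnitEquivInt a.2).prod := by
  conv_lhs => rw [← freeGroupEquivCoprodI.symm_apply_apply x,
    ← Word.equiv.symm_apply_apply (freeGroupEquivCoprodI x)]
  change lift f (freeGroupEquivCoprodI.symm (Word.prod _)) = _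
  rw [Word.prod, map_list_prod, map_list_prod, List.map_map, List.map_map]
  congr 1
  refine List.map_congr_left fun a _ => ?_
  obtain ⟨y, g⟩ := a
  conv_lhs => rw [← freeGroupUnitEquivInt.symm_apply_apply g]
  simp [freeGroupUnitEquivInt]

def letterShiftRep {l : List S} (hl : l.IsChain (· ≠ ·)) :
    FreeGroup S →* (Matrix (Fin (l.length + 1)) (Fin (l.length + 1)) ℤ)ˣ :=
  lift fun y => unitOneAdd (letterShift_mul_self hl y)

theorem range_letterShiftRep_le {l : List S} (hl : l.IsChain (· ≠ ·)) :
    (letterShiftRep hl).range ≤ (isMulFiltration_upperFiltration (l.length + 1)).congrUnits 1 :=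
  range_lift_le <| by
    rintro _ ⟨y, rfl⟩
    exact IsMulFiltration.unitOneAdd_mem_congrUnits _ _ (letterShift_mem_upperFiltration l y)

theorem exists_unitriangular_rep_ne_one {x : FreeGroup S} (hx : x ≠ 1) :
    ∃ n, ∃ ρ : FreeGroup S →* (Matrix (Fin (n + 1)) (Fin (n + 1)) ℤ)ˣ,
      ρ.range ≤ (isMulFiltration_upperFiltration (n + 1)).congrUnits 1 ∧ ρ x ≠ 1 := by
  set w := Word.equiv (freeGroupEquivCoprodI x)
  set l := w.toList.map Sigma.fst
  have hl : l.IsChain (· ≠ ·) := (List.isChain_map _).2 w.chain_ne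
  have hlen : l.length ≠ 0 := fun h => hx <| by
    have hw : w = Word.empty := Word.ext (List.length_eq_zero_iff.1 (by simpa [l] using h))
    have := congrArg (fun v => freeGroupEquivCoprodI.symm (Word.equiv.symm v)) hw
    simp only [w, Equiv.symm_apply_apply, MulEquiv.symm_apply_apply] at this
    exact this.trans (_root_.map_one freeGroupEquivCoprodI.symm)
  have hentry : (letterShiftRep hl x : Matrix (Fin (l.length + 1)) (Fin (l.length + 1)) ℤ)
      0 (Fin.last _) = (w.toList.map fun a => freeGroupUnitEquivInt a.2).prod := by
    rw [letterShiftRep, lift_eq_prod_syllables, ← Units.coeHom_apply, map_list_prod, List.map_map]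
    simp only [Function.comp_def, Units.coeHom_apply, val_unitOneAdd_zpow]
    exact prod_one_add_smul_letterShift_apply_zero_last w.toList Sigma.fst _
  refine ⟨l.length, letterShiftRep hl, range_letterShiftRep_le hl, fun h1 => ?_⟩
  rw [h1, Units.val_one, one_apply_ne (by simpa [Fin.ext_iff, eq_comm] using hlen)] at hentry
  obtain ⟨a, ha, ha0⟩ := List.mem_map.1 (List.prod_eq_zero_iff.1 hentry.symm)
  exact w.ne_one a ha (freeGroupUnitEquivInt.injective (ha0.trans rfl))

end FreeGroup

/-- Every free group is residually nilpotent: the intersection over all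
`k ≥ 1` of the terms `γ_k(F(S))` of the lower central series is trivial.  (Mathlib's
`lowerCentralSeries G n` is `γ_{n+1}(G)`, so the intersection over all `n : ℕ` is exactly
the intersection over all `k ≥ 1` of `γ_k`.) -/
theorem freeGroup_residually_nilpotent {S : Type*} :
    (⨅ n : ℕ, (⊤ : Subgroup (FreeGroup S)).lowerCentralSeries n) = ⊥ := by
  classical
  refine eq_bot_iff.2 fun x hx => Subgroup.mem_bot.2 <| not_not.1 fun hx1 => ?_
  obtain ⟨n, ρ, hρ, hρx⟩ := FreeGroup.exists_unitriangular_rep_ne_one hx1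
  have hmem := (isMulFiltration_upperFiltration (n + 1)).map_lowerCentralSeries_le_congrUnits hρ n
    ⟨x, Subgroup.mem_iInf.1 hx n, rfl⟩
  rw [congrUnits_upperFiltration_eq_bot le_rfl] at hmem
  exact hρx hmem
end

section
/- Fix p, n, m ≥ 1 with p prime, and let G_0 ⊳ G_1 ⊳ ⋯ ⊳ G_n be a subnormal sequence of groups (each G_i normal in G_{i-1}) such that for 1 ≤ i ≤ n the index [G_{i-1} : G_i] equals p^m. Then there exists a subgroup H with H ≤ G_n, H normal in G_0, and [G_0 : H] = p^N for some integer N with 1 ≤ N ≤ m·(p^{mn} − 1)/(p^m − 1). -/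
/-!
The witness is the normal core of `G n`. If `H ⊴ Γ` lies in `T` and `T` normalises `S`, then
`core S` is the intersection of the `[Γ : T]` conjugates of `S` by coset representatives of `T`,
and each of them meets `H` in a subgroup normal in `H` of index dividing `[T : S]`; hence
`[H : core S]` divides `[T : S] ^ [Γ : T]`. Along the chain, with `[Γ : G k] = p ^ (m * k)`, this
makes `[Γ : core (G n)]` a divisor of `p ^ (m * (1 + p ^ m + ⋯ + p ^ (m * (n - 1))))`, and it is a
multiple of `[Γ : G n] = p ^ (m * n) > 1`.
-/

open Subgroup

namespace Subgroup

variable {G : Type*} [Group G]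

theorem relIndex_dvd_relIndex_of_le_normalizer {A H L : Subgroup G} (hHL : H ≤ L)
    (hL : L ≤ normalizer A) : A.relIndex H ∣ A.relIndex L := by
  have := normal_subgroupOf_of_le_normalizer hL
  rw [← relIndex_subgroupOf hHL]
  exact relIndex_dvd_index_of_normal _ _

theorem relIndex_inf_dvd_mul {A L : Subgroup G} (B : Subgroup G) (hA : L ≤ normalizer A) :
    (A ⊓ B).relIndex L ∣ A.relIndex L * B.relIndex L := by
  rw [← relIndex_inf_mul_relIndex]
  exact mul_dvd_mul_right (relIndex_dvd_relIndex_of_le_normalizer inf_le_right hA) _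

theorem relIndex_iInf_dvd_prod {ι : Type*} [Fintype ι] {f : ι → Subgroup G} {L : Subgroup G}
    (hf : ∀ i, L ≤ normalizer (f i)) : (⨅ i, f i).relIndex L ∣ ∏ i, (f i).relIndex L := by
  classical
  suffices ∀ s : Finset ι, (⨅ i ∈ s, f i).relIndex L ∣ ∏ i ∈ s, (f i).relIndex L by
    simpa using this Finset.univ
  intro s
  induction s using Finset.induction_on with
  | empty => simp
  | insert a s ha ih =>
    rw [Finset.iInf_insert, Finset.prod_insert ha]
    exact (relIndex_inf_dvd_mul _ (hf a)).trans (mul_dvd_mul_left _ ih)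

theorem relIndex_map_conj_of_normal (S H : Subgroup G) [H.Normal] (g : G) :
    (S.map (MulAut.conj g)).relIndex H = S.relIndex H := by
  conv_lhs => rw [← Normal.map_conj_eq H g]
  exact relIndex_map_map_of_injective _ _ (MulAut.conj g).injective

theorem le_normalizer_map_conj {S L : Subgroup G} (hL : L ≤ normalizer S) (g : G) :
    L.map (MulAut.conj g) ≤ normalizer (S.map (MulAut.conj g : G →* G) : Set G) :=
  (map_mono hL).trans_eq (map_equiv_normalizer_eq S (MulAut.conj g))

theorem normalCore_eq_iInf_map_conj_out {S T : Subgroup G} (hT : T ≤ normalizer S) :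
    S.normalCore = ⨅ q : G ⧸ T, S.map (MulAut.conj q.out) := by
  rw [normalCore_eq_iInf_map_conj]
  refine le_antisymm (le_iInf fun q => iInf_le _ _) (le_iInf fun g => ?_)
  obtain ⟨t, ht⟩ := QuotientGroup.mk_out_eq_mul T g
  refine (iInf_le _ (g : G ⧸ T)).trans_eq ?_
  rw [ht, map_mul, MulAut.mul_def, MulEquiv.coe_monoidHom_trans, ← map_map, mem_normalizer_iff_map_conj_eq.mp (hT t.2)]

theorem relIndex_normalCore_dvd_pow {H S T : Subgroup G} [H.Normal] [T.FiniteIndex]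
    (hHT : H ≤ T) (hT : T ≤ normalizer S) : S.normalCore.relIndex H ∣ S.relIndex T ^ T.index := by
  have := Fintype.ofFinite (G ⧸ T)
  have hH : ∀ q : G ⧸ T, H ≤ normalizer (S.map (MulAut.conj q.out : G →* G) : Set G) := fun q => by
    simpa only [Normal.map_conj_eq H] using le_normalizer_map_conj (hHT.trans hT) q.out
  rw [normalCore_eq_iInf_map_conj_out hT, index_eq_card, Nat.card_eq_fintype_card,
    ← Finset.card_univ, ← Finset.prod_const]
  refine (relIndex_iInf_dvd_prod hH).trans (Finset.prod_dvd_prod_of_dvd _ _ fun q _ => ?_)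
  rw [relIndex_map_conj_of_normal]
  exact relIndex_dvd_relIndex_of_le_normalizer hHT hT

end Subgroup

section SubnormalChain

variable {Γ : Type*} [Group Γ] {G : ℕ → Subgroup Γ} {n d : ℕ}

theorem index_eq_pow_of_relIndex_succ_eq (hG0 : G 0 = ⊤) (hle : ∀ i < n, G (i + 1) ≤ G i)
    (hidx : ∀ i < n, (G (i + 1)).relIndex (G i) = d) {k : ℕ} (hk : k ≤ n) :
    (G k).index = d ^ k := by
  induction k with
  | zero => simp [hG0]
  | succ k ih =>
    rw [← relIndex_mul_index (hle k hk), hidx k hk, ih (by omega), pow_succ']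

theorem normalCore_index_dvd_pow_geomSum (hd : d ≠ 0) (hG0 : G 0 = ⊤)
    (hle : ∀ i < n, G (i + 1) ≤ G i) (hnorm : ∀ i < n, G i ≤ normalizer (G (i + 1) : Set Γ))
    (hidx : ∀ i < n, (G (i + 1)).relIndex (G i) = d) {k : ℕ} (hk : k ≤ n) :
    (G k).normalCore.index ∣ d ^ ∑ i ∈ Finset.range k, d ^ i := by
  induction k with
  | zero => simp [hG0, normalCore_eq_self]
  | succ k ih =>
    have hGk := index_eq_pow_of_relIndex_succ_eq hG0 hle hidx (k := k) (by omega)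
    have : (G k).FiniteIndex := ⟨hGk ▸ pow_ne_zero k hd⟩
    have hstep := relIndex_normalCore_dvd_pow (normalCore_le (G k)) (hnorm k hk)
    rw [hidx k hk, hGk] at hstep
    rw [← relIndex_mul_index (normalCore_mono (hle k hk)), Finset.sum_range_succ, pow_add,
      mul_comm]
    exact mul_dvd_mul (ih (by omega)) hstep

end SubnormalChain

/-- Fix `p, n, m ≥ 1` with `p` prime, and let
`G_0 ⊳ G_1 ⊳ ⋯ ⊳ G_n` be a subnormal sequence of groups (each `G_i` normal in `G_{i-1}`)
with `[G_{i-1} : G_i] = p^m` for `1 ≤ i ≤ n`.  Then there is a subgroup `H ≤ G_n` which is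
normal in `G_0` and satisfies `[G_0 : H] = p^N` for some `1 ≤ N ≤ m(p^{mn} − 1)/(p^m − 1)`.

We model `G_0` as the ambient group `Γ` (so `G 0 = ⊤`), normality of `G_{i}` in `G_{i-1}`
via `subgroupOf`, and the index `[G_{i-1} : G_i]` via `Subgroup.relindex`. -/
theorem subnormal_chain_normal_core {Γ : Type*} [Group Γ] (p m n : ℕ)
    (hp : p.Prime) (hm : 1 ≤ m) (hn : 1 ≤ n)
    (G : ℕ → Subgroup Γ) (hG0 : G 0 = ⊤)
    (hle : ∀ i < n, G (i + 1) ≤ G i)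
    (hnorm : ∀ i < n, ((G (i + 1)).subgroupOf (G i)).Normal)
    (hidx : ∀ i < n, (G (i + 1)).relIndex (G i) = p ^ m) :
    ∃ (H : Subgroup Γ) (N : ℕ), H ≤ G n ∧ H.Normal ∧ H.index = p ^ N ∧
      1 ≤ N ∧ N ≤ m * (p ^ (m * n) - 1) / (p ^ m - 1) := by
  have hpm : 2 ≤ p ^ m := Nat.one_lt_pow (by omega) hp.one_lt
  have hnormalizer : ∀ i < n, G i ≤ normalizer (G (i + 1) : Set Γ) := fun i hi =>
    (normal_subgroupOf_iff_le_normalizer (hle i hi)).mp (hnorm i hi)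
  have hcore := normalCore_index_dvd_pow_geomSum (by omega) hG0 hle hnormalizer hidx le_rfl
  rw [← pow_mul] at hcore
  obtain ⟨N, hN, hindex⟩ := (Nat.dvd_prime_pow hp).mp hcore
  refine ⟨(G n).normalCore, N, normalCore_le _, inferInstance, hindex, ?_, ?_⟩
  · have hdvd := index_dvd_of_le (normalCore_le (G n))
    rw [hindex, index_eq_pow_of_relIndex_succ_eq hG0 hle hidx le_rfl, ← pow_mul,
      Nat.pow_dvd_pow_iff_le_right hp.one_lt] at hdvd
    nlinarith
  · have hgeom : p ^ m - 1 ∣ p ^ (m * n) - 1 := by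
      simpa [← pow_mul] using Nat.sub_dvd_pow_sub_pow (p ^ m) 1 n
    rwa [Nat.geomSum_eq hpm, ← pow_mul, ← Nat.mul_div_assoc _ hgeom] at hN
end

section
/- Fix p, r, s ≥ 1 with p prime, and let A ⊳ B ⊳ C be groups with B normal in A, C normal in B, [A : B] = p^r, and [B : C] = p^s. Then there exists a subgroup D with D ≤ C, D normal in A, and [A : D] = p^N for some integer N with 1 ≤ N ≤ p^r·s + r. -/
/-!
Take `D` to be the normal core of `C`, the intersection of its `A`-conjugates. Since `B`
normalizes `C`, there are `[A : N_A(C)] ≤ [A : B] = p^r` conjugates, and each of them is again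
normal of index `p^s` in `B`. For subgroups normalized by `B`, the index in `B` of an
intersection divides the product of the indices, so `[B : D]` divides `p^(s·p^r)`, and
`[A : D] = [A : B][B : D]`.
-/

open Pointwise MulAction

namespace Subgroup

variable {G : Type*} [Group G]

theorem relIndex_inf_dvd_mul_s4 {H K L : Subgroup G} (hL : L ≤ normalizer H) :
    (H ⊓ K).relIndex L ∣ H.relIndex L * K.relIndex L := by
  have : (H.subgroupOf L).Normal :=
    ⟨fun n hn g => (mem_normalizer_iff.mp (hL g.2) n).mp hn⟩
  rw [← relIndex_inf_mul_relIndex, ← relIndex_subgroupOf inf_le_right]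
  exact mul_dvd_mul_right (relIndex_dvd_index_of_normal _ _) _

theorem relIndex_biInf_dvd_prod {ι : Type*} {L : Subgroup G} (s : Finset ι)
    (H : ι → Subgroup G) (hL : ∀ i ∈ s, L ≤ normalizer (H i)) :
    (⨅ i ∈ s, H i).relIndex L ∣ ∏ i ∈ s, (H i).relIndex L := by
  classical
  induction s using Finset.induction_on with
  | empty => simp
  | insert i s hi ih =>
    rw [Finset.iInf_insert, Finset.prod_insert hi]
    exact (relIndex_inf_dvd_mul_s4 (hL i (s.mem_insert_self i))).trans <|
      mul_dvd_mul_left _ (ih fun j hj => hL j (Finset.mem_insert_of_mem hj))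

theorem ncard_conjAct_orbit (H : Subgroup G) :
    (orbit (ConjAct G) H).ncard = (normalizer (H : Set G)).index := by
  have : stabilizer (ConjAct G) H =
      (normalizer (H : Set G)).comap (ConjAct.ofConjAct : ConjAct G ≃* G).toMonoidHom := by
    ext g
    exact conjAct_pointwise_smul_iff
  rw [← index_stabilizer, this, index_comap_of_surjective _ ConjAct.ofConjAct.surjective]

theorem normalCore_eq_biInf_conjAct_orbit (H : Subgroup G) :
    H.normalCore = ⨅ K ∈ orbit (ConjAct G) H, K := by
  rw [normalCore_eq_iInf_conjAct, orbit, iInf_range]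

variable {H K L : Subgroup G} [hLn : L.Normal]

theorem relIndex_eq_of_mem_conjAct_orbit (hK : K ∈ orbit (ConjAct G) H) :
    K.relIndex L = H.relIndex L := by
  obtain ⟨g, rfl⟩ := hK
  rw [← hLn.conjAct g, relIndex_pointwise_smul, hLn.conjAct g]

theorem le_normalizer_of_mem_conjAct_orbit (hLH : L ≤ normalizer H)
    (hK : K ∈ orbit (ConjAct G) H) : L ≤ normalizer K := by
  obtain ⟨g, rfl⟩ := hK
  calc L = g • L := (hLn.conjAct g).symm
    _ ≤ g • normalizer H := pointwise_smul_le_pointwise_smul_iff.mpr hLH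
    _ ≤ normalizer (g • H) := le_normalizer_map _

theorem relIndex_normalCore_dvd_pow_s4 (hLH : L ≤ normalizer H)
    [(normalizer (H : Set G)).FiniteIndex] :
    H.normalCore.relIndex L ∣ H.relIndex L ^ (normalizer (H : Set G)).index := by
  have hfin : (orbit (ConjAct G) H).Finite := by
    refine Set.finite_of_ncard_ne_zero ?_
    rw [ncard_conjAct_orbit]
    exact FiniteIndex.index_ne_zero
  calc H.normalCore.relIndex L = (⨅ K ∈ hfin.toFinset, K).relIndex L := by
        simp only [Set.Finite.mem_toFinset, ← normalCore_eq_biInf_conjAct_orbit]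
    _ ∣ ∏ K ∈ hfin.toFinset, K.relIndex L := relIndex_biInf_dvd_prod _ id fun K hK =>
        le_normalizer_of_mem_conjAct_orbit hLH (hfin.mem_toFinset.mp hK)
    _ = H.relIndex L ^ (normalizer (H : Set G)).index := by
        rw [Finset.prod_congr rfl fun K hK =>
            relIndex_eq_of_mem_conjAct_orbit (hfin.mem_toFinset.mp hK), Finset.prod_const,
          ← Set.ncard_eq_toFinset_card _ hfin, ncard_conjAct_orbit]

end Subgroup

open Subgroup

theorem exists_normal_subgroup_of_two_step_general {A : Type*} [Group A] (p r s : ℕ)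
    (hp : p.Prime) (hr : 1 ≤ r)
    (B C : Subgroup A) (hCB : C ≤ B)
    (hBnorm : B.Normal) (hCnorm : (C.subgroupOf B).Normal)
    (hB : B.index = p ^ r) (hC : C.relIndex B = p ^ s) :
    ∃ (D : Subgroup A) (N : ℕ), D ≤ C ∧ D.Normal ∧ D.index = p ^ N ∧
      1 ≤ N ∧ N ≤ p ^ r * s + r := by
  have hBC : B ≤ normalizer C := (normal_subgroupOf_iff_le_normalizer hCB).mp hCnorm
  have hNB : (normalizer (C : Set A)).index ∣ p ^ r := hB ▸ index_dvd_of_le hBC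
  have : (normalizer (C : Set A)).FiniteIndex :=
    ⟨ne_zero_of_dvd_ne_zero (pow_ne_zero r hp.ne_zero) hNB⟩
  have hdvd : C.normalCore.relIndex B ∣ p ^ (p ^ r * s) := by
    refine (relIndex_normalCore_dvd_pow_s4 hBC).trans ?_
    rw [hC, ← pow_mul, mul_comm s]
    exact pow_dvd_pow p (Nat.mul_le_mul_right s (Nat.le_of_dvd (pow_pos hp.pos r) hNB))
  obtain ⟨m, hm, hrel⟩ := (Nat.dvd_prime_pow hp).mp hdvd
  refine ⟨C.normalCore, m + r, normalCore_le C, inferInstance, ?_, by omega, by omega⟩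
  rw [← relIndex_mul_index ((normalCore_le C).trans hCB), hrel, hB, pow_add]

/-- Fix `p, r, s ≥ 1` with `p` prime, and let `A ⊳ B ⊳ C` be groups with
`B` normal in `A`, `C` normal in `B`, `[A : B] = p^r` and `[B : C] = p^s`.  Then there is a
subgroup `D ≤ C` which is normal in `A` and satisfies `[A : D] = p^N` for some integer `N`
with `1 ≤ N ≤ p^r·s + r`.

We model `A` as the ambient group, normality of `C` in `B` via `subgroupOf`, and the index
`[B : C]` via `Subgroup.relindex`. -/
theorem exists_normal_subgroup_of_two_step {A : Type*} [Group A] (p r s : ℕ)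
    (hp : p.Prime) (hr : 1 ≤ r) (hs : 1 ≤ s)
    (B C : Subgroup A) (hCB : C ≤ B)
    (hBnorm : B.Normal) (hCnorm : (C.subgroupOf B).Normal)
    (hB : B.index = p ^ r) (hC : C.relIndex B = p ^ s) :
    ∃ (D : Subgroup A) (N : ℕ), D ≤ C ∧ D.Normal ∧ D.index = p ^ N ∧
      1 ≤ N ∧ N ≤ p ^ r * s + r :=
  exists_normal_subgroup_of_two_step_general p r s hp hr B C hCB hBnorm hCnorm hB hC
end

section
/- Let G be a group, let p be a prime, and let m, n ≥ 1. Suppose G = G_0 ⊳ G_1 ⊳ ⋯ ⊳ G_n is a subnormal sequence of subgroups with [G_{i-1} : G_i] = p^m for 1 ≤ i ≤ n, and set M = m·(p^{mn} − 1)/(p^m − 1). Then γ_{M+1}(G) ≤ G_n; in particular, if x ∈ G does not lie in G_n, then x does not lie in γ_{M+1}(G). -/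
/-!
Peeling off `G₁ ⊴ G`, induction on the chain `G₁ ⊳ ⋯ ⊳ Gₙ` inside `G₁` gives `L ⊴ G₁` with
`L ≤ Gₙ` and `[G₁ : L] ∣ p ^ M'`, where `M' = m(1 + p^m + ⋯ + p^{m(n-2)})`. Since `L` is normal in
the normal subgroup `G₁`, its conjugates `gLg⁻¹` depend only on the coset `gG₁`, so the normal core
of `L` in `G` is an intersection of `p^m` normal subgroups of `G₁` of index `[G₁ : L]`; its index in
`G` therefore divides `p ^ (m + p^m M') = p ^ M`. Finally `G` modulo this core is a `p`-group of
order dividing `p ^ M`, hence of nilpotency class at most `M`, so `γ_{M+1}(G)` lies in the core.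
-/

namespace Subgroup

variable {G : Type*} [Group G]

theorem _root_.IsPGroup.pow_nilpotencyClass_dvd_card {p : ℕ} [hp : Fact p.Prime] [Finite G]
    (hG : IsPGroup p G) : p ^ Group.nilpotencyClass G ∣ Nat.card G := by
  have := hG.isNilpotent
  obtain ⟨e, he⟩ := hG.exists_card_eq
  suffices ∀ k ≤ Group.nilpotencyClass G, p ^ k ∣ Nat.card (upperCentralSeries G k) by
    simpa [upperCentralSeries_nilpotencyClass] using this _ le_rfl
  intro k hk
  induction k with
  | zero => simp
  | succ k ih =>
    have hlt : upperCentralSeries G k < upperCentralSeries G (k + 1) :=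
      upperCentralSeries.StrictMonoOn G (by simp; omega) (by simpa) (by omega)
    obtain ⟨r, hr⟩ := card_dvd_of_le hlt.le
    have hr1 : r ≠ 1 := by
      rintro rfl
      exact hlt.ne (eq_of_le_of_card_ge hlt.le (by simp [hr]))
    obtain ⟨j, -, rfl⟩ := (Nat.dvd_prime_pow hp.out).mp
      (he ▸ (Dvd.intro_left _ hr.symm).trans (card_subgroup_dvd_card _))
    have hj : j ≠ 0 := by rintro rfl; exact hr1 (pow_zero p)
    rw [hr, pow_succ]
    exact mul_dvd_mul (ih (by omega)) (dvd_pow_self p hj)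

theorem lowerCentralSeries_eq_bot_of_card_dvd_prime_pow {p e : ℕ} (hp : p.Prime)
    (h : Nat.card G ∣ p ^ e) : (⊤ : Subgroup G).lowerCentralSeries e = ⊥ := by
  have := Fact.mk hp
  obtain ⟨j, -, hj⟩ := (Nat.dvd_prime_pow hp).mp h
  have : Finite G := Nat.finite_of_card_ne_zero (by simp [hj, hp.ne_zero])
  have hG := IsPGroup.of_card hj
  have := hG.isNilpotent
  rw [lowerCentralSeries_eq_bot_iff_nilpotencyClass_le]
  exact (Nat.pow_dvd_pow_iff_le_right hp.one_lt).mp (hG.pow_nilpotencyClass_dvd_card.trans h)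

theorem lowerCentralSeries_le_of_index_dvd_prime_pow {p e : ℕ} (hp : p.Prime) {K : Subgroup G}
    [K.Normal] (h : K.index ∣ p ^ e) : (⊤ : Subgroup G).lowerCentralSeries e ≤ K := by
  have hbot := lowerCentralSeries_eq_bot_of_card_dvd_prime_pow hp h
  rw [← map_top_of_surjective _ (QuotientGroup.mk'_surjective K), ← map_lowerCentralSeries,
    ← le_bot_iff, map_le_iff_le_comap, MonoidHom.comap_bot, QuotientGroup.ker_mk'] at hbot
  exact hbot

theorem index_inf_dvd_of_normal {H K : Subgroup G} [H.Normal] :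
    (H ⊓ K).index ∣ H.index * K.index := by
  rw [← relIndex_mul_index inf_le_right, inf_relIndex_right]
  exact mul_dvd_mul_right (relIndex_dvd_index_of_normal H K) _

theorem index_iInf_dvd_prod_of_normal {ι : Type*} [Fintype ι] {f : ι → Subgroup G}
    (hf : ∀ i, (f i).Normal) : (⨅ i, f i).index ∣ ∏ i, (f i).index := by
  classical
  rw [← Finset.inf_univ_eq_iInf]
  induction (Finset.univ : Finset ι) using Finset.induction_on with
  | empty => simp
  | insert a s ha ih =>
    rw [Finset.inf_insert, Finset.prod_insert ha]
    exact index_inf_dvd_of_normal.trans (mul_dvd_mul_left _ ih)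

theorem exists_normal_le_map_subtype_index_dvd (N : Subgroup G) [N.Normal] (L : Subgroup N)
    [hL : L.Normal] :
    ∃ C : Subgroup G, C.Normal ∧ C ≤ L.map N.subtype ∧ C.index ∣ L.index ^ N.index * N.index := by
  refine ⟨(L.map N.subtype).normalCore, inferInstance, normalCore_le _, ?_⟩
  rcases eq_or_ne N.index 0 with hN | hN
  · simp [hN]
  have : N.FiniteIndex := ⟨hN⟩
  have := Fintype.ofFinite (G ⧸ N)
  let D : Subgroup N := ⨅ q : G ⧸ N, L.comap (MulAut.conjNormal q.out).toMonoidHom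
  -- With `(g : G ⧸ N).out = g * n`, `g x g⁻¹` is `out x out⁻¹ ∈ L` conjugated by `g n⁻¹ g⁻¹ ∈ N`.
  have hDC : D.map N.subtype ≤ (L.map N.subtype).normalCore := by
    rintro _ ⟨x, hx, rfl⟩ g
    obtain ⟨n, hn⟩ := QuotientGroup.mk_out_eq_mul N g
    have hx' := mem_iInf.mp hx (g : G ⧸ N)
    have hk : g * (n : G)⁻¹ * g⁻¹ ∈ N := ‹N.Normal›.conj_mem _ (inv_mem n.2) g
    refine ⟨_, hL.conj_mem _ hx' ⟨_, hk⟩, ?_⟩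
    simp only [MulEquiv.coe_toMonoidHom, coe_subtype, coe_mul, MulAut.conjNormal_apply, hn,
      InvMemClass.coe_inv]
    group
  refine (index_dvd_of_le hDC).trans ?_
  rw [index_map_subtype]
  refine mul_dvd_mul_right ?_ _
  have hconj (q : G ⧸ N) : (L.comap (MulAut.conjNormal q.out).toMonoidHom).index = L.index :=
    index_comap_of_surjective L (MulAut.conjNormal q.out).surjective
  refine (index_iInf_dvd_prod_of_normal fun q => hL.comap _).trans (dvd_of_eq ?_)
  rw [Finset.prod_congr rfl fun q _ => hconj q, Finset.prod_const, Finset.card_univ,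
    ← Nat.card_eq_fintype_card, ← index_eq_card]

structure IsSubnormalChainOfIndex {Γ : Type*} [Group Γ] (G : ℕ → Subgroup Γ) (n d : ℕ) :
    Prop where
  le : ∀ i < n, G (i + 1) ≤ G i
  normal : ∀ i < n, ((G (i + 1)).subgroupOf (G i)).Normal
  relIndex_eq : ∀ i < n, (G (i + 1)).relIndex (G i) = d

namespace IsSubnormalChainOfIndex

variable {Γ : Type*} [Group Γ] {G : ℕ → Subgroup Γ} {n d : ℕ}

theorem antitone (hc : IsSubnormalChainOfIndex G n d) {i j : ℕ} (hij : i ≤ j) (hjn : j ≤ n) :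
    G j ≤ G i := by
  induction j, hij using Nat.le_induction with
  | base => exact le_rfl
  | succ j hij ih => exact (hc.le j hjn).trans (ih (by omega))

theorem normal_one (hc : IsSubnormalChainOfIndex G (n + 1) d) (hG0 : G 0 = ⊤) : (G 1).Normal := by
  have h := hc.normal 0 n.succ_pos
  rw [hG0, normal_subgroupOf_iff le_top] at h
  exact ⟨fun x hx g => h x g hx (mem_top g)⟩

theorem subgroupOf_one (hc : IsSubnormalChainOfIndex G (n + 1) d) :
    IsSubnormalChainOfIndex (fun i => (G (i + 1)).subgroupOf (G 1)) n d where
  le i hi := subgroupOf_mono _ (hc.le (i + 1) (by omega))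
  normal i hi := by
    have hle := hc.le (i + 1) (by omega)
    refine (normal_subgroupOf_iff (subgroupOf_mono _ hle)).mpr fun x g => ?_
    exact (normal_subgroupOf_iff hle).mp (hc.normal (i + 1) (by omega)) x g
  relIndex_eq i hi := by
    rw [relIndex_subgroupOf (hc.antitone (by omega) (by omega))]
    exact hc.relIndex_eq (i + 1) (by omega)

theorem exists_normal_le_index_dvd (hc : IsSubnormalChainOfIndex G n d) (hG0 : G 0 = ⊤) :
    ∃ K : Subgroup Γ, K.Normal ∧ K ≤ G n ∧ K.index ∣ d ^ ∑ i ∈ Finset.range n, d ^ i := by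
  induction n generalizing Γ with
  | zero => exact ⟨⊤, inferInstance, hG0.ge, by simp⟩
  | succ n ih =>
    have := hc.normal_one hG0
    obtain ⟨L, hL, hLG, hLidx⟩ := ih hc.subgroupOf_one (subgroupOf_self _)
    obtain ⟨K, hK, hKL, hKidx⟩ := exists_normal_le_map_subtype_index_dvd (G 1) L
    have hG1 : (G 1).index = d := by simpa [hG0] using hc.relIndex_eq 0 n.succ_pos
    refine ⟨K, hK, hKL.trans ?_, hKidx.trans ?_⟩
    · exact (map_mono hLG).trans ((subgroupOf_map_subtype _ _).trans_le inf_le_left)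
    · rw [geom_sum_succ, pow_succ, mul_comm d, pow_mul, hG1]
      exact mul_dvd_mul_right (pow_dvd_pow_of_dvd hLidx d) d

end IsSubnormalChainOfIndex

end Subgroup

theorem lowerCentralSeries_le_of_subnormal_chain_general {Γ : Type*} [Group Γ] (p m n : ℕ)
    (hp : p.Prime) (hm : 1 ≤ m)
    (G : ℕ → Subgroup Γ) (hG0 : G 0 = ⊤)
    (hle : ∀ i < n, G (i + 1) ≤ G i)
    (hnorm : ∀ i < n, ((G (i + 1)).subgroupOf (G i)).Normal)
    (hidx : ∀ i < n, (G (i + 1)).relIndex (G i) = p ^ m) :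
    (⊤ : Subgroup Γ).lowerCentralSeries (m * (p ^ (m * n) - 1) / (p ^ m - 1)) ≤ G n := by
  have hpm : 2 ≤ p ^ m := hp.two_le.trans (Nat.le_self_pow (by omega) p)
  have hM : m * (p ^ (m * n) - 1) / (p ^ m - 1) = m * ∑ i ∈ Finset.range n, (p ^ m) ^ i := by
    rw [Nat.geomSum_eq hpm, pow_mul, Nat.mul_div_assoc]
    simpa using Nat.sub_dvd_pow_sub_pow (p ^ m) 1 n
  obtain ⟨K, hK, hKG, hKidx⟩ :=
    (Subgroup.IsSubnormalChainOfIndex.mk hle hnorm hidx).exists_normal_le_index_dvd hG0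
  rw [← pow_mul] at hKidx
  rw [hM]
  exact (Subgroup.lowerCentralSeries_le_of_index_dvd_prime_pow hp hKidx).trans hKG

/-- Let `G` be a group, `p` a prime, and `m, n ≥ 1`.  Suppose
`G = G_0 ⊳ G_1 ⊳ ⋯ ⊳ G_n` is a subnormal sequence with `[G_{i-1} : G_i] = p^m` for
`1 ≤ i ≤ n`, and set `M = m(p^{mn} − 1)/(p^m − 1)`.  Then `γ_{M+1}(G) ≤ G_n`; in
particular every `x ∉ G_n` satisfies `x ∉ γ_{M+1}(G)`.

We model `G_0` as the ambient group (so `G 0 = ⊤`); Mathlib's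
`lowerCentralSeries G M` is `γ_{M+1}(G)`. -/
theorem lowerCentralSeries_le_of_subnormal_chain {Γ : Type*} [Group Γ] (p m n : ℕ)
    (hp : p.Prime) (hm : 1 ≤ m) (hn : 1 ≤ n)
    (G : ℕ → Subgroup Γ) (hG0 : G 0 = ⊤)
    (hle : ∀ i < n, G (i + 1) ≤ G i)
    (hnorm : ∀ i < n, ((G (i + 1)).subgroupOf (G i)).Normal)
    (hidx : ∀ i < n, (G (i + 1)).relIndex (G i) = p ^ m) :
    (⊤ : Subgroup Γ).lowerCentralSeries (m * (p ^ (m * n) - 1) / (p ^ m - 1)) ≤ G n :=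
  lowerCentralSeries_le_of_subnormal_chain_general p m n hp hm G hG0 hle hnorm hidx
end

section
/- Let F be the free group on two generators a_1, a_2, and define sequences of elements by x_1 = a_1, y_1 = a_2, and inductively x_k = [x_{k−1}, y_{k−1}] and y_k = [x_{k−1}, y_{k−1}^{−1}]. Then for every k ≥ 1, the elements x_k and y_k generate a free subgroup of F of rank 2; in particular x_k ≠ 1 and y_k ≠ 1 for all k ≥ 1. -/
/-!
The pair `(x (k + 1), y (k + 1))` is the image of `(x k, y k)` under the endomorphism
`ψ : a₁ ↦ [a₁, a₂], a₂ ↦ [a₁, a₂⁻¹]` of `F₂`, so the map `F₂ → F` sending the generators to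
`x (k + 1), y (k + 1)` is the one for `x k, y k` composed with `ψ`, and it suffices that `ψ` is
injective. That is the ping-pong lemma for `F₂` acting on itself by left multiplication:
`[a₁, a₂^±]` sends every reduced word not starting with `a₂^± a₁` to one starting with
`a₁ a₂^±`, and its inverse `[a₂^±, a₁]` sends every reduced word not starting with `a₁ a₂^±` to
one starting with `a₂^± a₁`.
-/

open scoped commutatorElement

namespace FreeGroup

variable {α : Type*}

theorem commutator_mk_singleton (c d : α × Bool) :
    ⁅mk [c], mk [d]⁆ = mk [c, d, (c.1, !c.2), (d.1, !d.2)] := by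
  simp [commutatorElement_def, mul_mk, inv_mk, invRev]

/-- At most the last letter of the commutator cancels against `w`. -/
theorem take_two_toWord_commutator_mul [DecidableEq α] {c d : α × Bool} (hcd : c.1 ≠ d.1)
    {w : FreeGroup α} (hw : w.toWord.take 2 ≠ [d, c]) :
    (⁅mk [c], mk [d]⁆ * w).toWord.take 2 = [c, d] := by
  have hW : IsReduced w.toWord := isReduced_toWord
  rw [← mk_toWord (x := w), commutator_mk_singleton, mul_mk, toWord_mk]
  rcases hW' : w.toWord with _ | ⟨p, W⟩
  · rw [IsReduced.reduce_eq (by simp [hcd, Ne.symm hcd])]; rfl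
  rw [hW'] at hw hW
  by_cases hpd : p = d
  · subst hpd
    have hstep : Red.Step ([c, p, (c.1, !c.2), (p.1, !p.2)] ++ p :: W)
        ([c, p, (c.1, !c.2)] ++ W) :=
      Red.Step.not_rev (L₁ := [c, p, (c.1, !c.2)]) (x := p.1) (b := p.2)
    rw [reduce.Step.eq hstep]
    rcases W with _ | ⟨q, W⟩
    · rw [IsReduced.reduce_eq (by simp [hcd, Ne.symm hcd])]; rfl
    have hqc : c.1 = q.1 → c.2 = !q.2 := by
      intro h1
      by_contra h2
      exact hw (by simp [(Prod.ext h1.symm (by simpa [eq_comm] using h2) : q = c)])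
    rw [IsReduced.reduce_eq
      (by simpa [hcd, Ne.symm hcd, (isReduced_cons_cons.1 hW).2] using hqc)]
    rfl
  · have hdp : d.1 = p.1 → d.2 = !p.2 := by
      intro h1
      by_contra h2
      exact hpd (Prod.ext h1.symm (by simpa [eq_comm] using h2))
    rw [IsReduced.reduce_eq (by simpa [hcd, Ne.symm hcd, hW] using hdp)]
    rfl

theorem ne_one_of_injective_lift {G : Type*} [Group G] {f : α → G}
    (hf : Function.Injective (lift f)) (a : α) : f a ≠ 1 := by
  rw [← lift_apply_of (f := f)]
  exact (map_ne_one_iff _ hf).2 (of_ne_one a)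

end FreeGroup

open FreeGroup

def commutatorEndo : FreeGroup Bool →* FreeGroup Bool :=
  FreeGroup.lift fun i => ⁅of false, if i then (of true)⁻¹ else of true⁆

theorem commutatorEndo_of (i : Bool) :
    commutatorEndo (of i) = ⁅mk [(false, true)], mk [(true, !i)]⁆ := by
  cases i <;> rfl

theorem commutatorEndo_injective : Function.Injective commutatorEndo := by
  let start (w : FreeGroup Bool) : List (Bool × Bool) := w.toWord.take 2
  -- `(false, true)` is the letter `a₁`, and `(true, !i)` is `a₂` or `a₂⁻¹` according to `i`.
  let X (i : Bool) : Set (FreeGroup Bool) := start ⁻¹' {[(false, true), (true, !i)]}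
  let Y (i : Bool) : Set (FreeGroup Bool) := start ⁻¹' {[(true, !i), (false, true)]}
  have hdisj {l l' : List (Bool × Bool)} (h : l ≠ l') :
      Disjoint (start ⁻¹' {l}) (start ⁻¹' {l'}) :=
    (Set.disjoint_singleton.2 h).preimage start
  have h := FreeGroup.injective_lift_of_ping_pong (fun i => commutatorEndo (of i)) X Y
    (fun i => ⟨mk [(false, true), (true, !i)], by cases i <;> rfl⟩)
    (fun i j hij => hdisj (by simpa using hij))
    (fun i j hij => hdisj (by simpa using hij))
    (fun i j => hdisj (by simp))
    (by
      rintro i _ ⟨w, hw, rfl⟩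
      rw [commutatorEndo_of]
      exact take_two_toWord_commutator_mul Bool.false_ne_true hw)
    (by
      rintro i _ ⟨w, hw, rfl⟩
      rw [Pi.inv_apply, commutatorEndo_of, commutatorElement_inv]
      exact take_two_toWord_commutator_mul Bool.false_ne_true.symm hw)
  exact (lift.apply_symm_apply commutatorEndo) ▸ h

theorem lift_commutators_eq_comp_commutatorEndo {G : Type*} [Group G] (g h : G) :
    lift (fun c : Bool => if c then ⁅g, h⁻¹⁆ else ⁅g, h⁆)
      = (lift fun c : Bool => if c then h else g).comp commutatorEndo := by
  ext c
  cases c <;> simp [commutatorEndo, map_commutatorElement]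

/-- Let `F` be the free group on two generators `a_1, a_2` (modelled as
`FreeGroup Bool` with `a_1 = of false`, `a_2 = of true`), and define `x_1 = a_1`,
`y_1 = a_2`, `x_{k+1} = [x_k, y_k]`, `y_{k+1} = [x_k, y_k⁻¹]`.  Then for every `k ≥ 1` the
elements `x_k` and `y_k` freely generate a free subgroup of rank `2` (i.e. the homomorphism
from the rank‑2 free group sending the two generators to `x_k` and `y_k` is injective); in
particular `x_k ≠ 1` and `y_k ≠ 1`. -/
theorem iterated_commutators_generate_free_subgroup
    (x y : ℕ → FreeGroup Bool)
    (hx1 : x 1 = FreeGroup.of false) (hy1 : y 1 = FreeGroup.of true)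
    (hx : ∀ k, 1 ≤ k → x (k + 1) = ⁅x k, y k⁆)
    (hy : ∀ k, 1 ≤ k → y (k + 1) = ⁅x k, (y k)⁻¹⁆)
    (k : ℕ) (hk : 1 ≤ k) :
    Function.Injective
        (FreeGroup.lift (fun c : Bool => if c then y k else x k) :
          FreeGroup Bool →* FreeGroup Bool) ∧
      x k ≠ 1 ∧ y k ≠ 1 := by
  have hinj : Function.Injective (lift fun c : Bool => if c then y k else x k) := by
    induction k, hk using Nat.le_induction with
    | base =>
      have hid : (fun c : Bool => if c then y 1 else x 1) = of := by
        funext c; cases c <;> simp [hx1, hy1]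
      rw [hid, lift_of_eq_id]
      exact Function.injective_id
    | succ n hn ih =>
      have hcomp := lift_commutators_eq_comp_commutatorEndo (x n) (y n)
      rw [← hy n hn, ← hx n hn] at hcomp
      rw [hcomp, MonoidHom.coe_comp]
      exact ih.comp commutatorEndo_injective
  exact ⟨hinj, by simpa using ne_one_of_injective_lift hinj false,
    by simpa using ne_one_of_injective_lift hinj true⟩
end

section
/- Let F be the free group on a set S, let ℤF be its integral group ring, and let ε : ℤF → ℤ be the augmentation map. For each s ∈ S there exists a unique ℤ-linear map D_s : ℤF → ℤF satisfying D_s(xy) = D_s(x)·ε(y) + x·D_s(y) for all x, y ∈ ℤF, together with D_s(s) = 1 and D_s(s') = 0 for every s' ∈ S with s' ≠ s. -/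
/-! Restricted to group elements, a linear map with the twisted Leibniz rule is a crossed
homomorphism `d (g * h) = d g + g * d h` (using `ε g = 1`), and conversely the Leibniz rule on
basis elements extends bilinearly; so free derivatives correspond to crossed homomorphisms
`F → ℤF`. A map `d` is a crossed homomorphism exactly when `g ↦ (d g, g)` is a homomorphism into
the semidirect product `ℤF ⋊ F` for the left multiplication action, and by the universal property
of the free group such a splitting homomorphism exists, uniquely, with any prescribed values
`(v t, t)` on the generators. -/

open MonoidAlgebra

def IsCrossedHom {F R : Type*} [Monoid F] [Semiring R] (ρ : F →* R) (d : F → R) : Prop :=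
  ∀ g h, d (g * h) = d g + ρ g * d h

section CrossedHom

variable {F R : Type*} [Group F] [Ring R]

def MonoidHom.mulLeftAut (ρ : F →* R) : F →* MulAut (Multiplicative R) :=
  (MulAutMultiplicative R).symm.toMonoidHom.comp (AddAut.mulLeft.comp ρ.toHomUnits)

@[simp]
lemma MonoidHom.mulLeftAut_apply (ρ : F →* R) (g : F) (x : Multiplicative R) :
    ρ.mulLeftAut g x = Multiplicative.ofAdd (ρ g * x.toAdd) :=
  rfl

namespace IsCrossedHom

variable {ρ : F →* R} {d : F → R}

lemma map_one (hd : IsCrossedHom ρ d) : d 1 = 0 := by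
  simpa using hd 1 1

def toSemidirectProduct (hd : IsCrossedHom ρ d) : F →* Multiplicative R ⋊[ρ.mulLeftAut] F where
  toFun g := ⟨.ofAdd (d g), g⟩
  map_one' := by ext <;> simp [hd.map_one]
  map_mul' g h := by ext <;> simp [hd g h]

end IsCrossedHom

end CrossedHom

theorem FreeGroup.existsUnique_isCrossedHom {S R : Type*} [Ring R] (ρ : FreeGroup S →* R)
    (v : S → R) : ∃! d : FreeGroup S → R, IsCrossedHom ρ d ∧ ∀ t, d (of t) = v t := by
  let ψ : FreeGroup S →* Multiplicative R ⋊[ρ.mulLeftAut] FreeGroup S :=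
    lift fun t => ⟨.ofAdd (v t), of t⟩
  have ψ_right : SemidirectProduct.rightHom.comp ψ = MonoidHom.id _ := by
    ext; simp [ψ]
  refine ⟨fun g => (ψ g).left.toAdd, ⟨fun g h => ?_, fun t => by simp [ψ]⟩, ?_⟩
  · have ψ_right_g : (ψ g).right = g := congr($ψ_right g)
    simp [SemidirectProduct.mul_left, ψ_right_g]
  · rintro d ⟨hd, hd_of⟩
    have : hd.toSemidirectProduct = ψ := by
      ext <;> simp [IsCrossedHom.toSemidirectProduct, ψ, hd_of]
    funext g
    exact congr(($this g).left.toAdd)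

theorem MonoidAlgebra.leibniz_iff_isCrossedHom {k G : Type*} [CommRing k] [Monoid G]
    {ε : k[G] →ₗ[k] k} (hε : ∀ g, ε (of k G g) = 1) (D : k[G] →ₗ[k] k[G]) :
    (∀ x y, D (x * y) = ε y • D x + x * D y) ↔ IsCrossedHom (of k G) (fun g => D (of k G g)) := by
  refine ⟨fun h g g' => by simpa only [map_mul, hε, one_smul] using h (of k G g) (of k G g'),
    fun hd x y => ?_⟩
  have leibniz_of_left (g : G) (y : k[G]) :
      D (of k G g * y) = ε y • D (of k G g) + of k G g * D y := by
    induction y using MonoidAlgebra.induction_on with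
    | of g' => simpa only [map_mul, hε, one_smul] using hd g g'
    | add y y' hy hy' => simp only [mul_add, map_add, hy, hy', add_smul]; abel
    | smul r y hy => simp only [mul_smul_comm, map_smul, hy, smul_add, smul_smul, smul_eq_mul]
  induction x using MonoidAlgebra.induction_on with
  | of g => exact leibniz_of_left g y
  | add x x' hx hx' => simp only [add_mul, map_add, hx, hx', smul_add]; abel
  | smul r x hx => simp only [smul_mul_assoc, map_smul, hx, smul_add, smul_comm r (ε y)]

/-- Let `F` be the free group on a set `S`, `ℤF` its integral group ring
(`MonoidAlgebra ℤ F`), and `ε : ℤF → ℤ` the augmentation map (the `ℤ`-linear map with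
`ε(g) = 1` for all `g ∈ F`, given here by its defining property).  For each `s ∈ S` there
is a unique `ℤ`-linear map `D_s : ℤF → ℤF` satisfying `D_s(xy) = D_s(x)·ε(y) + x·D_s(y)`
for all `x, y ∈ ℤF`, together with `D_s(s) = 1` and `D_s(s') = 0` for `s' ∈ S`, `s' ≠ s`. -/
theorem existsUnique_freeDerivative {S : Type*}
    (ε : MonoidAlgebra ℤ (FreeGroup S) →ₗ[ℤ] ℤ)
    (hε : ∀ g : FreeGroup S, ε (MonoidAlgebra.of ℤ (FreeGroup S) g) = 1)
    (s : S) :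
    ∃! D : MonoidAlgebra ℤ (FreeGroup S) →ₗ[ℤ] MonoidAlgebra ℤ (FreeGroup S),
      (∀ x y, D (x * y) = ε y • D x + x * D y) ∧
      D (MonoidAlgebra.of ℤ (FreeGroup S) (FreeGroup.of s)) = 1 ∧
      ∀ s' : S, s' ≠ s → D (MonoidAlgebra.of ℤ (FreeGroup S) (FreeGroup.of s')) = 0 := by
  classical
  obtain ⟨d, ⟨hd, hd_of⟩, hd_unique⟩ :=
    FreeGroup.existsUnique_isCrossedHom (of ℤ (FreeGroup S)) fun t => if t = s then 1 else 0
  let b := MonoidAlgebra.basis (FreeGroup S) ℤ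
  have hD : ∀ g, b.constr ℤ d (of ℤ _ g) = d g := b.constr_basis ℤ d
  refine ⟨b.constr ℤ d, ⟨(leibniz_iff_isCrossedHom hε _).2 ?_, ?_, fun s' hs' => ?_⟩, ?_⟩
  · simpa only [hD] using hd
  · rw [hD, hd_of, if_pos rfl]
  · rw [hD, hd_of, if_neg hs']
  · rintro D ⟨hD_leibniz, hD_s, hD_ne⟩
    have hD_of : ∀ t, D (of ℤ _ (FreeGroup.of t)) = if t = s then 1 else 0 := fun t => by
      split_ifs with ht
      · exact ht ▸ hD_s
      · exact hD_ne t ht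
    have := hd_unique _ ⟨(leibniz_iff_isCrossedHom hε D).1 hD_leibniz, hD_of⟩
    refine b.ext fun g => ?_
    rw [b.constr_basis]
    exact congr_fun this g
end

section
/- Let F be the free group on a set S with augmentation map ε : ℤF → ℤ, and for each s ∈ S let D_s : ℤF → ℤF be a ℤ-linear map satisfying D_s(xy) = D_s(x)·ε(y) + x·D_s(y) for all x, y ∈ ℤF, with D_s(s) = 1 and D_s(s') = 0 for s' ∈ S, s' ≠ s. If k ≥ 2 and g ∈ γ_k(F), then for every j with 1 ≤ j ≤ k − 1 and every choice of s_1, …, s_j ∈ S, one has ε(D_{s_1}(D_{s_2}(⋯(D_{s_j}(g))⋯))) = 0. -/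
/-!
The kernel `I` of the augmentation is a right ideal containing every `g - 1`, and
`γ_{n+1}(F) ⊆ 1 + I^{n+1}`: the commutator case rests on
`⁅p, q⁆ - 1 = ((p - 1)(q - 1) - (q - 1)(p - 1)) (qp)⁻¹`. Since `ε` vanishes on `I`, the Leibniz
rule gives `D(I^{n+2}) ⊆ I^{n+1}` and `D 1 = 0`. For `j < k` we have `g ∈ γ_{j+1}(F)`, so `j`
derivatives take `g = 1 + (g - 1)` into `I = ker ε`.
-/

open MonoidAlgebra
open scoped commutatorElement

theorem Submodule.pow_succ_mul_top_le {R A : Type*} [CommSemiring R] [Semiring A] [Algebra R A]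
    {I : Submodule R A} (hI : I * ⊤ ≤ I) (n : ℕ) : I ^ (n + 1) * ⊤ ≤ I ^ (n + 1) := by
  rw [Submodule.pow_succ, mul_assoc]
  exact mul_le_mul' le_rfl hI

theorem AlgHom.ker_mul_top_le {k A : Type*} [CommSemiring k] [Semiring A] [Algebra k A]
    (ε : A →ₐ[k] k) : LinearMap.ker ε.toLinearMap * ⊤ ≤ LinearMap.ker ε.toLinearMap :=
  Submodule.mul_le.2 fun x hx y _ => by simp_all

namespace MonoidAlgebra

variable {k G : Type*} [CommRing k] [Group G]

/-- `G ∩ (1 + J)`; for `J` the `n`-th power of the augmentation ideal this is the `n`-th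
dimension subgroup. -/
def dimensionSubgroup (J : Submodule k (MonoidAlgebra k G)) (hJ : J * ⊤ ≤ J) : Subgroup G where
  carrier := {g | of k G g - 1 ∈ J}
  one_mem' := by
    show of k G 1 - 1 ∈ J
    rw [map_one, sub_self]
    exact zero_mem J
  mul_mem' {a b} ha hb := by
    have : of k G (a * b) - 1 = (of k G a - 1) * of k G b + (of k G b - 1) := by
      rw [map_mul]; noncomm_ring
    show _ ∈ J
    rw [this]
    exact add_mem (hJ (Submodule.mul_mem_mul ha Submodule.mem_top)) hb
  inv_mem' {a} ha := by
    have : of k G a⁻¹ - 1 = -((of k G a - 1) * of k G a⁻¹) := by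
      rw [sub_mul, ← map_mul, mul_inv_cancel, map_one, one_mul, neg_sub]
    show _ ∈ J
    rw [this]
    exact neg_mem (hJ (Submodule.mul_mem_mul ha Submodule.mem_top))

theorem of_commutatorElement_sub_one (p q : G) :
    of k G ⁅p, q⁆ - 1 =
      ((of k G p - 1) * (of k G q - 1) - (of k G q - 1) * (of k G p - 1)) * of k G (q * p)⁻¹ := by
  have hqp : of k G q * of k G p * of k G (q * p)⁻¹ = 1 := by
    rw [← map_mul, ← map_mul, mul_inv_cancel, map_one]
  have hpq : of k G p * of k G q * of k G (q * p)⁻¹ = of k G ⁅p, q⁆ := by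
    rw [← map_mul, ← map_mul, commutatorElement_def]
    congr 1
    group
  calc of k G ⁅p, q⁆ - 1
      = (of k G p * of k G q - of k G q * of k G p) * of k G (q * p)⁻¹ := by
        rw [sub_mul, hpq, hqp]
    _ = _ := by noncomm_ring

theorem lowerCentralSeries_le_dimensionSubgroup {J : Submodule k (MonoidAlgebra k G)}
    (hJ : J * ⊤ ≤ J) (hsub : ∀ g, of k G g - 1 ∈ J) (n : ℕ) :
    (⊤ : Subgroup G).lowerCentralSeries n ≤
      dimensionSubgroup (J ^ (n + 1)) (Submodule.pow_succ_mul_top_le hJ n) := by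
  induction n with
  | zero => exact fun g _ => by simpa [dimensionSubgroup] using hsub g
  | succ n ih =>
    refine Subgroup.commutator_le.2 fun p hp q _ => ?_
    have hp' : of k G p - 1 ∈ J ^ (n + 1) := ih hp
    show of k G ⁅p, q⁆ - 1 ∈ J ^ (n + 2)
    rw [of_commutatorElement_sub_one]
    refine Submodule.pow_succ_mul_top_le hJ (n + 1)
      (Submodule.mul_mem_mul (sub_mem ?_ ?_) Submodule.mem_top)
    · exact Submodule.mul_mem_mul hp' (hsub q)
    · rw [Submodule.pow_succ' _ n.succ_ne_zero]
      exact Submodule.mul_mem_mul (hsub q) hp'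

theorem of_sub_one_mem_ker_lift_one (g : G) :
    of k G g - 1 ∈ LinearMap.ker (lift k k G 1).toLinearMap := by
  rw [LinearMap.mem_ker, map_sub, AlgHom.toLinearMap_apply, AlgHom.toLinearMap_apply, lift_of,
    MonoidHom.one_apply, map_one, sub_self]

theorem toLinearMap_lift_one_eq {k M : Type*} [CommSemiring k] [Monoid M]
    {ε : MonoidAlgebra k M →ₗ[k] k} (hε : ∀ g, ε (of k M g) = 1) :
    (lift k k M 1).toLinearMap = ε :=
  lhom_ext' fun g => LinearMap.ext_ring <| by simpa using (hε g).symm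

end MonoidAlgebra

section Leibniz

variable {k A : Type*} [CommRing k] [Ring A] [Algebra k A] {ε : A →ₐ[k] k}

theorem map_one_eq_zero_of_leibniz {D : A →ₗ[k] A}
    (hD : ∀ x y, D (x * y) = ε y • D x + x * D y) : D 1 = 0 := by
  simpa using hD 1 1

theorem map_mem_ker_pow_of_leibniz {D : A →ₗ[k] A}
    (hD : ∀ x y, D (x * y) = ε y • D x + x * D y) {n : ℕ} {x : A}
    (hx : x ∈ LinearMap.ker ε.toLinearMap ^ (n + 2)) :
    D x ∈ LinearMap.ker ε.toLinearMap ^ (n + 1) := by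
  rw [Submodule.pow_succ] at hx
  refine Submodule.mul_induction_on hx (fun y hy z hz => ?_) (fun y z hy hz => ?_)
  · have hz : ε z = 0 := hz
    rw [hD, hz, zero_smul, zero_add]
    exact Submodule.pow_succ_mul_top_le ε.ker_mul_top_le n
      (Submodule.mul_mem_mul hy Submodule.mem_top)
  · rw [map_add]
    exact add_mem hy hz

variable {ι : Type*} {D : ι → A →ₗ[k] A}

theorem foldr_comp_apply_mem_ker_pow (hD : ∀ i x y, D i (x * y) = ε y • D i x + x * D i y)
    (l : List ι) {m : ℕ} {x : A} (hx : x ∈ LinearMap.ker ε.toLinearMap ^ (l.length + m + 1)) :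
    l.foldr (fun i f => (D i).comp f) LinearMap.id x ∈ LinearMap.ker ε.toLinearMap ^ (m + 1) := by
  induction l generalizing m with
  | nil => simpa using hx
  | cons i l ih =>
    refine map_mem_ker_pow_of_leibniz (hD i) (ih ?_)
    rwa [List.length_cons, show l.length + 1 + m + 1 = l.length + (m + 1) + 1 by omega] at hx

theorem foldr_comp_apply_one (hD1 : ∀ i, D i 1 = 0) {l : List ι} (hl : l ≠ []) :
    l.foldr (fun i f => (D i).comp f) LinearMap.id (1 : A) = 0 := by
  induction l with
  | nil => exact absurd rfl hl
  | cons i l ih =>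
    rcases eq_or_ne l [] with rfl | hl'
    · exact hD1 i
    · simp [ih hl']

theorem apply_foldr_comp_apply_eq_zero (hD : ∀ i x y, D i (x * y) = ε y • D i x + x * D i y)
    {l : List ι} (hl : l ≠ []) {x : A}
    (hx : x - 1 ∈ LinearMap.ker ε.toLinearMap ^ (l.length + 1)) :
    ε (l.foldr (fun i f => (D i).comp f) LinearMap.id x) = 0 := by
  have h := foldr_comp_apply_mem_ker_pow hD l (m := 0) hx
  rw [map_sub, foldr_comp_apply_one (fun i => map_one_eq_zero_of_leibniz (hD i)) hl, sub_zero,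
    zero_add, Submodule.pow_one] at h
  exact h

end Leibniz

theorem augmentation_freeDerivative_eq_zero_of_mem_lowerCentralSeries_general {S : Type*}
    (ε : MonoidAlgebra ℤ (FreeGroup S) →ₗ[ℤ] ℤ)
    (hε : ∀ g : FreeGroup S, ε (MonoidAlgebra.of ℤ (FreeGroup S) g) = 1)
    (D : S → MonoidAlgebra ℤ (FreeGroup S) →ₗ[ℤ] MonoidAlgebra ℤ (FreeGroup S))
    (hD : ∀ s x y, D s (x * y) = ε y • D s x + x * D s y)
    (k : ℕ) (g : FreeGroup S)
    (hg : g ∈ (⊤ : Subgroup (FreeGroup S)).lowerCentralSeries (k - 1))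
    (l : List S) (hl : 1 ≤ l.length) (hl' : l.length ≤ k - 1) :
    ε ((l.foldr (fun s f => (D s).comp f) LinearMap.id)
        (MonoidAlgebra.of ℤ (FreeGroup S) g)) = 0 := by
  obtain rfl := toLinearMap_lift_one_eq hε
  have hD' : ∀ s x y, D s (x * y) = lift ℤ ℤ (FreeGroup S) 1 y • D s x + x * D s y := hD
  have hg' : g ∈ dimensionSubgroup _ _ :=
    lowerCentralSeries_le_dimensionSubgroup (lift ℤ ℤ (FreeGroup S) 1).ker_mul_top_le
      of_sub_one_mem_ker_lift_one l.length (Subgroup.lowerCentralSeries_antitone _ hl' hg)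
  exact apply_foldr_comp_apply_eq_zero hD' (List.ne_nil_of_length_pos hl) hg'

/-- Let `F` be the free group on a set `S`, `ε : ℤF → ℤ` the
augmentation map, and for each `s ∈ S` let `D_s : ℤF → ℤF` be a `ℤ`-linear map with
`D_s(xy) = D_s(x)·ε(y) + x·D_s(y)`, `D_s(s) = 1`, and `D_s(s') = 0` for `s' ≠ s`.
If `k ≥ 2` and `g ∈ γ_k(F)` (Mathlib's `lowerCentralSeries F (k-1)`), then for every
`j` with `1 ≤ j ≤ k − 1` and every `s_1, …, s_j ∈ S` (a list `l` of length `j`), the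
iterated free derivative `D_{s_1}(D_{s_2}(⋯(D_{s_j}(g))⋯))` has augmentation `0`. -/
theorem augmentation_freeDerivative_eq_zero_of_mem_lowerCentralSeries {S : Type*}
    (ε : MonoidAlgebra ℤ (FreeGroup S) →ₗ[ℤ] ℤ)
    (hε : ∀ g : FreeGroup S, ε (MonoidAlgebra.of ℤ (FreeGroup S) g) = 1)
    (D : S → MonoidAlgebra ℤ (FreeGroup S) →ₗ[ℤ] MonoidAlgebra ℤ (FreeGroup S))
    (hD : ∀ s x y, D s (x * y) = ε y • D s x + x * D s y)
    (hD1 : ∀ s : S, D s (MonoidAlgebra.of ℤ (FreeGroup S) (FreeGroup.of s)) = 1)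
    (hD0 : ∀ s s' : S, s' ≠ s → D s (MonoidAlgebra.of ℤ (FreeGroup S) (FreeGroup.of s')) = 0)
    (k : ℕ) (hk : 2 ≤ k) (g : FreeGroup S)
    (hg : g ∈ (⊤ : Subgroup (FreeGroup S)).lowerCentralSeries (k - 1))
    (l : List S) (hl : 1 ≤ l.length) (hl' : l.length ≤ k - 1) :
    ε ((l.foldr (fun s f => (D s).comp f) LinearMap.id)
        (MonoidAlgebra.of ℤ (FreeGroup S) g)) = 0 :=
  augmentation_freeDerivative_eq_zero_of_mem_lowerCentralSeries_general ε hε D hD k g hg l hl hl'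
end

section
/- Let F be the free group on a set S with augmentation map ε : ℤF → ℤ, and for each s ∈ S let D_s : ℤF → ℤF be a ℤ-linear map satisfying D_s(xy) = D_s(x)·ε(y) + x·D_s(y) for all x, y ∈ ℤF, with D_s(s) = 1 and D_s(s') = 0 for s' ∈ S, s' ≠ s. Let n ≥ 1, let s_1, …, s_n ∈ S satisfy s_i ≠ s_{i+1} for 1 ≤ i < n, let m_1, …, m_n be nonzero integers, and set w = s_1^{m_1} s_2^{m_2} ⋯ s_n^{m_n}. Then ε(D_{s_1}(D_{s_2}(⋯(D_{s_n}(w))⋯))) = m_1 m_2 ⋯ m_n; in particular this value is nonzero. -/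
/-!
Write `φ_L = ε ∘ D_{l₁} ∘ ⋯ ∘ D_{l_k}` for a list `L = [l₁, …, l_k]` of generators.  Peeling the
last syllable off a word, `D_u (y · r^a) = D_u y + y · D_u (r^a)`, and the second summand vanishes
unless `u = r`.  If `u = r` and the derivative `D_t` applied next differs from `D_u`, then
`D_t (y · D_u (u^a)) = a · D_t y`, because `ε (D_u (u^a)) = a` while `D_t` kills the span of the
powers of `u`.  Hence for an alternating `L` ending in `u`,
`φ_L (y · u^a) = φ_L y + a · φ_{L without u} y`.  By induction on the word, `φ_L` vanishes on words
with fewer syllables than `L` has letters, and on `s₁^{m₁} ⋯ s_n^{m_n}` with `L = [s₁, …, s_n]` it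
picks up exactly one factor `m_i` per syllable.
-/

open MonoidAlgebra (of)

section

variable {G : Type*} [Group G] {ε : MonoidAlgebra ℤ G →ₗ[ℤ] ℤ}

theorem augmentation_one (hε : ∀ g, ε (of ℤ G g) = 1) : ε 1 = 1 := by
  simpa only [_root_.map_one] using hε 1

theorem augmentation_mul (hε : ∀ g, ε (of ℤ G g) = 1) (y z : MonoidAlgebra ℤ G) :
    ε (y * z) = ε y * ε z := by
  induction y using MonoidAlgebra.induction_on with
  | of g =>
    induction z using MonoidAlgebra.induction_on with
    | of h => rw [← map_mul, hε, hε, hε, one_mul]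
    | add z z' hz hz' => rw [mul_add, map_add, map_add, hz, hz', mul_add]
    | smul r z hz => rw [mul_smul_comm, map_smul, map_smul, hz, smul_eq_mul, smul_eq_mul,
        mul_left_comm]
  | add y y' hy hy' => rw [add_mul, map_add, map_add, hy, hy', add_mul]
  | smul r y hy => rw [smul_mul_assoc, map_smul, map_smul, hy, smul_eq_mul, smul_eq_mul, mul_assoc]

/-- `ε`-twisted derivations of `ℤ[G]`, i.e. free derivatives when `ε` is the augmentation. -/
def IsFoxDerivation (ε : MonoidAlgebra ℤ G →ₗ[ℤ] ℤ)
    (d : MonoidAlgebra ℤ G →ₗ[ℤ] MonoidAlgebra ℤ G) : Prop :=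
  ∀ y z, d (y * z) = ε z • d y + y * d z

namespace IsFoxDerivation

variable {d d' : MonoidAlgebra ℤ G →ₗ[ℤ] MonoidAlgebra ℤ G}

theorem map_one (hd : IsFoxDerivation ε d) (hε : ∀ g, ε (of ℤ G g) = 1) : d 1 = 0 := by
  have h := hd 1 1
  rwa [mul_one, augmentation_one hε, one_smul, one_mul, left_eq_add] at h

theorem map_mul_of (hd : IsFoxDerivation ε d) (hε : ∀ g, ε (of ℤ G g) = 1)
    (y : MonoidAlgebra ℤ G) (g : G) : d (y * of ℤ G g) = d y + y * d (of ℤ G g) := by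
  rw [hd, hε, one_smul]

theorem map_of_zpow_add_one (hd : IsFoxDerivation ε d) (hε : ∀ g, ε (of ℤ G g) = 1)
    (g : G) (a : ℤ) :
    d (of ℤ G (g ^ (a + 1))) = d (of ℤ G (g ^ a)) + of ℤ G (g ^ a) * d (of ℤ G g) := by
  rw [zpow_add_one, map_mul, hd.map_mul_of hε]

theorem map_of_zpow_eq_zero (hd : IsFoxDerivation ε d) (hε : ∀ g, ε (of ℤ G g) = 1)
    {g : G} (hg : d (of ℤ G g) = 0) (a : ℤ) : d (of ℤ G (g ^ a)) = 0 := by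
  induction a using Int.induction_on with
  | zero => rw [zpow_zero, _root_.map_one, hd.map_one hε]
  | succ k ih => rw [hd.map_of_zpow_add_one hε, ih, hg, mul_zero, add_zero]
  | pred k ih =>
    have h := hd.map_of_zpow_add_one hε g (-k - 1)
    rwa [sub_add_cancel, ih, hg, mul_zero, add_zero, eq_comm] at h

theorem augmentation_map_of_zpow (hd : IsFoxDerivation ε d) (hε : ∀ g, ε (of ℤ G g) = 1)
    (g : G) (a : ℤ) : ε (d (of ℤ G (g ^ a))) = a * ε (d (of ℤ G g)) := by
  have step (k : ℤ) :
      ε (d (of ℤ G (g ^ (k + 1)))) = ε (d (of ℤ G (g ^ k))) + ε (d (of ℤ G g)) := by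
    rw [hd.map_of_zpow_add_one hε, map_add, augmentation_mul hε, hε, one_mul]
  induction a using Int.induction_on with
  | zero => rw [zpow_zero, _root_.map_one, hd.map_one hε, map_zero, zero_mul]
  | succ k ih => rw [step, ih, add_one_mul]
  | pred k ih =>
    have h := step (-k - 1)
    rw [sub_add_cancel, ih] at h
    linear_combination -h

theorem map_map_of_zpow_eq_zero (hd : IsFoxDerivation ε d) (hd' : IsFoxDerivation ε d')
    (hε : ∀ g, ε (of ℤ G g) = 1) {g : G} (hg : d (of ℤ G g) = 1) (hg' : d' (of ℤ G g) = 0)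
    (a : ℤ) : d' (d (of ℤ G (g ^ a))) = 0 := by
  have step (k : ℤ) : d' (d (of ℤ G (g ^ (k + 1)))) = d' (d (of ℤ G (g ^ k))) := by
    rw [hd.map_of_zpow_add_one hε, hg, mul_one, map_add, hd'.map_of_zpow_eq_zero hε hg', add_zero]
  induction a using Int.induction_on with
  | zero => rw [zpow_zero, _root_.map_one, hd.map_one hε, map_zero]
  | succ k ih => rw [step, ih]
  | pred k ih => rw [← ih, ← step, sub_add_cancel]

theorem map_mul_map_of_zpow (hd : IsFoxDerivation ε d) (hd' : IsFoxDerivation ε d')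
    (hε : ∀ g, ε (of ℤ G g) = 1) {g : G} (hg : d (of ℤ G g) = 1) (hg' : d' (of ℤ G g) = 0)
    (y : MonoidAlgebra ℤ G) (a : ℤ) : d' (y * d (of ℤ G (g ^ a))) = a • d' y := by
  rw [hd', hd.augmentation_map_of_zpow hε, hg, augmentation_one hε, mul_one,
    hd.map_map_of_zpow_eq_zero hd' hε hg hg', mul_zero, add_zero]

end IsFoxDerivation

end

section Chain

variable {S G : Type*} [Group G] {ε : MonoidAlgebra ℤ G →ₗ[ℤ] ℤ}
  {D : S → Module.End ℤ (MonoidAlgebra ℤ G)} {x : S → G}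

def syllableProd (x : S → G) (P : List (S × ℤ)) : G :=
  (P.map fun p => x p.1 ^ p.2).prod

theorem syllableProd_nil : syllableProd x [] = 1 := rfl

theorem syllableProd_append_singleton (P : List (S × ℤ)) (r : S) (a : ℤ) :
    syllableProd x (P ++ [(r, a)]) = syllableProd x P * x r ^ a := by
  simp [syllableProd]

theorem augmentation_prod_map_mul_map_of_zpow (hε : ∀ g, ε (of ℤ G g) = 1)
    (hD : ∀ s, IsFoxDerivation ε (D s)) (hD1 : ∀ s, D s (of ℤ G (x s)) = 1)
    (hD0 : ∀ s s', s' ≠ s → D s (of ℤ G (x s')) = 0)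
    {L : List S} {u : S} (hL : (L ++ [u]).IsChain (· ≠ ·)) (y : MonoidAlgebra ℤ G) (a : ℤ) :
    ε ((L.map D).prod (y * D u (of ℤ G (x u ^ a)))) = a * ε ((L.map D).prod y) := by
  cases L using List.reverseRecOn with
  | nil =>
    rw [List.map_nil, List.prod_nil, Module.End.one_apply, Module.End.one_apply,
      augmentation_mul hε, (hD u).augmentation_map_of_zpow hε, hD1, augmentation_one hε, mul_one,
      mul_comm]
  | append_singleton L t =>
    have htu : t ≠ u := List.isChain_append.mp hL |>.2.2 t (by simp) u (by simp)
    rw [List.map_append, List.prod_append, List.map_singleton, List.prod_singleton,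
      Module.End.mul_apply, Module.End.mul_apply,
      (hD u).map_mul_map_of_zpow (hD t) hε (hD1 u) (hD0 t u htu.symm), map_zsmul, map_zsmul,
      smul_eq_mul]

theorem augmentation_prod_map_mul_of_zpow_self (hε : ∀ g, ε (of ℤ G g) = 1)
    (hD : ∀ s, IsFoxDerivation ε (D s)) (hD1 : ∀ s, D s (of ℤ G (x s)) = 1)
    (hD0 : ∀ s s', s' ≠ s → D s (of ℤ G (x s')) = 0)
    {L : List S} {u : S} (hL : (L ++ [u]).IsChain (· ≠ ·)) (y : MonoidAlgebra ℤ G) (a : ℤ) :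
    ε (((L ++ [u]).map D).prod (y * of ℤ G (x u ^ a))) =
      ε (((L ++ [u]).map D).prod y) + a * ε ((L.map D).prod y) := by
  simp only [List.map_append, List.map_singleton, List.prod_append, List.prod_singleton,
    Module.End.mul_apply]
  rw [(hD u).map_mul_of hε, map_add, map_add,
    augmentation_prod_map_mul_map_of_zpow hε hD hD1 hD0 hL]

theorem augmentation_prod_map_mul_of_zpow_of_ne (hε : ∀ g, ε (of ℤ G g) = 1)
    (hD : ∀ s, IsFoxDerivation ε (D s)) (hD0 : ∀ s s', s' ≠ s → D s (of ℤ G (x s')) = 0)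
    (L : List S) {u r : S} (hur : u ≠ r) (y : MonoidAlgebra ℤ G) (a : ℤ) :
    ε (((L ++ [u]).map D).prod (y * of ℤ G (x r ^ a))) = ε (((L ++ [u]).map D).prod y) := by
  simp only [List.map_append, List.map_singleton, List.prod_append, List.prod_singleton,
    Module.End.mul_apply]
  rw [(hD u).map_mul_of hε, (hD u).map_of_zpow_eq_zero hε (hD0 u r hur.symm), mul_zero, add_zero]

theorem augmentation_prod_map_of_syllableProd_eq_zero (hε : ∀ g, ε (of ℤ G g) = 1)
    (hD : ∀ s, IsFoxDerivation ε (D s)) (hD1 : ∀ s, D s (of ℤ G (x s)) = 1)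
    (hD0 : ∀ s s', s' ≠ s → D s (of ℤ G (x s')) = 0)
    (P : List (S × ℤ)) {L : List S} (hL : L.IsChain (· ≠ ·)) (hlen : P.length < L.length) :
    ε ((L.map D).prod (of ℤ G (syllableProd x P))) = 0 := by
  induction P using List.reverseRecOn generalizing L with
  | nil =>
    cases L using List.reverseRecOn with
    | nil => simp at hlen
    | append_singleton L u _ =>
      rw [List.map_append, List.map_singleton, List.prod_append, List.prod_singleton,
        Module.End.mul_apply, syllableProd_nil, map_one, (hD u).map_one hε, map_zero, map_zero]
  | append_singleton P p ih =>
    obtain ⟨r, a⟩ := p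
    cases L using List.reverseRecOn with
    | nil => simp at hlen
    | append_singleton L u _ =>
      have hlen' : P.length < L.length := by simpa using hlen
      have hlen'' : P.length < (L ++ [u]).length := by rw [List.length_append]; omega
      rw [syllableProd_append_singleton, map_mul]
      by_cases hur : u = r
      · subst hur
        rw [augmentation_prod_map_mul_of_zpow_self hε hD hD1 hD0 hL, ih hL hlen'',
          ih hL.left_of_append hlen', mul_zero, add_zero]
      · rw [augmentation_prod_map_mul_of_zpow_of_ne hε hD hD0 L hur, ih hL hlen'']

theorem augmentation_prod_map_fst_of_syllableProd (hε : ∀ g, ε (of ℤ G g) = 1)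
    (hD : ∀ s, IsFoxDerivation ε (D s)) (hD1 : ∀ s, D s (of ℤ G (x s)) = 1)
    (hD0 : ∀ s s', s' ≠ s → D s (of ℤ G (x s')) = 0)
    (P : List (S × ℤ)) (hP : (P.map Prod.fst).IsChain (· ≠ ·)) :
    ε (((P.map Prod.fst).map D).prod (of ℤ G (syllableProd x P))) =
      (P.map Prod.snd).prod := by
  induction P using List.reverseRecOn with
  | nil =>
    simp only [syllableProd_nil, List.map_nil, List.prod_nil, Module.End.one_apply, hε]
  | append_singleton P p ih =>
    obtain ⟨r, a⟩ := p
    have hfst : (P ++ [(r, a)]).map Prod.fst = P.map Prod.fst ++ [r] := by simp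
    rw [hfst] at hP
    rw [hfst, syllableProd_append_singleton, map_mul,
      augmentation_prod_map_mul_of_zpow_self hε hD hD1 hD0 hP,
      augmentation_prod_map_of_syllableProd_eq_zero hε hD hD1 hD0 P hP (by simp),
      ih hP.left_of_append, List.map_append, List.map_singleton, List.prod_append,
      List.prod_singleton, zero_add, mul_comm]

end Chain

theorem augmentation_freeDerivative_chain_eq_prod_general {S : Type*}
    (ε : MonoidAlgebra ℤ (FreeGroup S) →ₗ[ℤ] ℤ)
    (hε : ∀ g : FreeGroup S, ε (MonoidAlgebra.of ℤ (FreeGroup S) g) = 1)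
    (D : S → MonoidAlgebra ℤ (FreeGroup S) →ₗ[ℤ] MonoidAlgebra ℤ (FreeGroup S))
    (hD : ∀ s x y, D s (x * y) = ε y • D s x + x * D s y)
    (hD1 : ∀ s : S, D s (MonoidAlgebra.of ℤ (FreeGroup S) (FreeGroup.of s)) = 1)
    (hD0 : ∀ s s' : S, s' ≠ s → D s (MonoidAlgebra.of ℤ (FreeGroup S) (FreeGroup.of s')) = 0)
    (n : ℕ) (s : Fin n → S)
    (hs : ∀ (i : Fin n) (h : i.val + 1 < n), s i ≠ s ⟨i.val + 1, h⟩)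
    (m : Fin n → ℤ)
    (w : FreeGroup S)
    (hw : w = (List.ofFn (fun i : Fin n => FreeGroup.of (s i) ^ m i)).prod) :
    ε (((List.finRange n).foldr (fun i f => (D (s i)).comp f) LinearMap.id)
        (MonoidAlgebra.of ℤ (FreeGroup S) w)) = ∏ i, m i := by
  set P := List.ofFn fun i => (s i, m i)
  have hfst : P.map Prod.fst = List.ofFn s := by rw [List.map_ofFn]; rfl
  have hchain : (P.map Prod.fst).IsChain (· ≠ ·) := by
    rw [hfst, List.isChain_iff_getElem]
    simp only [List.length_ofFn, List.getElem_ofFn]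
    exact fun i hi => hs ⟨i, by omega⟩ hi
  have hchainD : (List.finRange n).foldr (fun i f => (D (s i)).comp f) LinearMap.id =
      ((P.map Prod.fst).map D).prod := by
    rw [hfst, List.prod_eq_foldr, List.ofFn_eq_map, List.map_map, List.foldr_map]
    rfl
  have hword : w = syllableProd FreeGroup.of P := by
    rw [hw, syllableProd, List.map_ofFn]; rfl
  rw [hchainD, hword, augmentation_prod_map_fst_of_syllableProd hε hD hD1 hD0 P hchain,
    List.map_ofFn, List.prod_ofFn]
  rfl

/-- Let `F` be the free group on a set `S`, `ε : ℤF → ℤ` the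
augmentation map, and for each `s ∈ S` let `D_s : ℤF → ℤF` be a `ℤ`-linear map with
`D_s(xy) = D_s(x)·ε(y) + x·D_s(y)`, `D_s(s) = 1`, and `D_s(s') = 0` for `s' ≠ s`.
Let `n ≥ 1`, let `s_1, …, s_n ∈ S` (here `s 0, …, s (n-1)`) satisfy `s_i ≠ s_{i+1}`,
let `m_1, …, m_n` be nonzero integers, and set `w = s_1^{m_1} ⋯ s_n^{m_n}`.  Then
`ε(D_{s_1}(D_{s_2}(⋯(D_{s_n}(w))⋯))) = m_1 m_2 ⋯ m_n ≠ 0`. -/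
theorem augmentation_freeDerivative_chain_eq_prod {S : Type*}
    (ε : MonoidAlgebra ℤ (FreeGroup S) →ₗ[ℤ] ℤ)
    (hε : ∀ g : FreeGroup S, ε (MonoidAlgebra.of ℤ (FreeGroup S) g) = 1)
    (D : S → MonoidAlgebra ℤ (FreeGroup S) →ₗ[ℤ] MonoidAlgebra ℤ (FreeGroup S))
    (hD : ∀ s x y, D s (x * y) = ε y • D s x + x * D s y)
    (hD1 : ∀ s : S, D s (MonoidAlgebra.of ℤ (FreeGroup S) (FreeGroup.of s)) = 1)
    (hD0 : ∀ s s' : S, s' ≠ s → D s (MonoidAlgebra.of ℤ (FreeGroup S) (FreeGroup.of s')) = 0)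
    (n : ℕ) (hn : 1 ≤ n) (s : Fin n → S)
    (hs : ∀ (i : Fin n) (h : i.val + 1 < n), s i ≠ s ⟨i.val + 1, h⟩)
    (m : Fin n → ℤ) (hm : ∀ i, m i ≠ 0)
    (w : FreeGroup S)
    (hw : w = (List.ofFn (fun i : Fin n => FreeGroup.of (s i) ^ m i)).prod) :
    ε (((List.finRange n).foldr (fun i f => (D (s i)).comp f) LinearMap.id)
        (MonoidAlgebra.of ℤ (FreeGroup S) w)) = ∏ i, m i :=
  augmentation_freeDerivative_chain_eq_prod_general ε hε D hD hD1 hD0 n s hs m w hw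
end

section
/- Let F be the free group on a set S with augmentation map ε : ℤF → ℤ, and for each s ∈ S let D_s : ℤF → ℤF be a ℤ-linear map satisfying D_s(xy) = D_s(x)·ε(y) + x·D_s(y) for all x, y ∈ ℤF, with D_s(s) = 1 and D_s(s') = 0 for s' ∈ S, s' ≠ s. Let n ≥ 1, let s_1, …, s_n ∈ S satisfy s_i ≠ s_{i+1} for 1 ≤ i < n, let m_1, …, m_n be nonzero integers, set u_i = s_i^{m_i}, and let w = u_1 u_2 ⋯ u_n. Then for every j with 1 ≤ j ≤ n, D_{s_j}(D_{s_{j+1}}(⋯(D_{s_n}(w))⋯)) equals the sum over all tuples 1 ≤ i_j < i_{j+1} < ⋯ < i_n ≤ n of (u_1 ⋯ u_{i_j − 1})·D_{s_j}(u_{i_j})·ε(D_{s_{j+1}}(u_{i_{j+1}})) ⋯ ε(D_{s_n}(u_{i_n})). -/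
/-! Expanding `D_{s_n}(w)` by the Leibniz rule gives `∑ᵢ (u_1 ⋯ u_{i-1}) D_{s_n}(u_i)`. Applying
`D_{s_{n-1}}` to a summand splits it into `D_{s_{n-1}}(u_1 ⋯ u_{i-1}) ε(D_{s_n}(u_i))` plus
`(u_1 ⋯ u_{i-1}) D_{s_{n-1}}(D_{s_n}(u_i))`, and the second term vanishes: for `s ≠ s'`,
`D_{s'}(t^m)` is zero unless `t = s'`, and then it is an integer combination of powers of `s'`,
all of which `D_s` kills. Expanding the first term again by the Leibniz rule and inducting on the
number of derivatives produces the sum over increasing index tuples. -/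

section

open Finset

theorem Fin.prod_filter_val_pos_eq_prod_succ {M : Type*} [CommMonoid M] {k : ℕ}
    (f : Fin (k + 1) → M) :
    ∏ t ∈ univ.filter (fun t : Fin (k + 1) => 0 < t.val), f t = ∏ t : Fin k, f t.succ := by
  rw [prod_filter, Fin.prod_univ_succ]
  simp

theorem Fin.prod_filter_val_pos_mul_apply_zero {M : Type*} [CommMonoid M] {k : ℕ} (hk : 0 < k)
    (f : Fin k → M) :
    (∏ t ∈ univ.filter (fun t : Fin k => 0 < t.val), f t) * f ⟨0, hk⟩ = ∏ t, f t := by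
  obtain ⟨k, rfl⟩ := Nat.exists_eq_add_one_of_ne_zero hk.ne'
  rw [Fin.prod_filter_val_pos_eq_prod_succ, Fin.prod_univ_succ, mul_comm]
  rfl

theorem Fin.sum_filter_strictMono_succ {M : Type*} [AddCommMonoid M] {n k : ℕ} (hk : 0 < k)
    (F : Fin n → (Fin k → Fin n) → M) :
    ∑ ι ∈ univ.filter (fun ι : Fin (k + 1) → Fin n => StrictMono ι), F (ι 0) (Fin.tail ι) =
      ∑ ι ∈ univ.filter (fun ι : Fin k → Fin n => StrictMono ι),
        ∑ i ∈ univ.filter (fun i : Fin n => i.val < (ι ⟨0, hk⟩).val), F i ι := by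
  obtain ⟨k, rfl⟩ := Nat.exists_eq_add_one_of_ne_zero hk.ne'
  simp only [sum_filter]
  rw [← (Fin.consEquiv fun _ => Fin n).sum_comp, Fintype.sum_prod_type, sum_comm]
  refine sum_congr rfl fun ι _ => ?_
  have hcons (i : Fin n) :
      StrictMono ((Fin.consEquiv fun _ => Fin n) (i, ι)) ↔ i < ι 0 ∧ StrictMono ι :=
    strictMono_vecCons
  have htail (i : Fin n) : Fin.tail ((Fin.consEquiv fun _ => Fin n) (i, ι)) = ι :=
    Fin.tail_cons _ _
  simp only [Fin.consEquiv_apply, Fin.cons_zero, hcons, htail]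
  by_cases hι : StrictMono ι <;> simp [hι]

theorem List.drop_finRange_eq_cons {n j : ℕ} (hj : j < n) :
    (List.finRange n).drop j = ⟨j, hj⟩ :: (List.finRange n).drop (j + 1) := by
  rw [List.drop_eq_getElem_cons (by simpa using hj), List.getElem_finRange]
  rfl

section

variable {G : Type*} [Group G]

local notation "of" => MonoidAlgebra.of ℤ G

def IsFreeDerivative (ε : MonoidAlgebra ℤ G →ₗ[ℤ] ℤ)
    (δ : MonoidAlgebra ℤ G →ₗ[ℤ] MonoidAlgebra ℤ G) : Prop :=
  ∀ x y, δ (x * y) = ε y • δ x + x * δ y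

namespace IsFreeDerivative

variable {ε : MonoidAlgebra ℤ G →ₗ[ℤ] ℤ} {δ δ' : MonoidAlgebra ℤ G →ₗ[ℤ] MonoidAlgebra ℤ G}

theorem map_one (hε : ∀ g, ε (of g) = 1) (hδ : IsFreeDerivative ε δ) : δ 1 = 0 := by
  have h := hδ (of 1) (of 1)
  rwa [← map_mul, mul_one, hε, one_smul, (of).map_one, one_mul, left_eq_add] at h

theorem map_of_zpow_add_one (hε : ∀ g, ε (of g) = 1) (hδ : IsFreeDerivative ε δ) (g : G)
    (k : ℤ) : δ (of (g ^ (k + 1))) = δ (of (g ^ k)) + of (g ^ k) * δ (of g) := by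
  rw [zpow_add_one, map_mul, hδ, hε, one_smul]

theorem map_of_zpow_eq_zero (hε : ∀ g, ε (of g) = 1) (hδ : IsFreeDerivative ε δ) {g : G}
    (hg : δ (of g) = 0) (k : ℤ) : δ (of (g ^ k)) = 0 := by
  induction k using Int.induction_on with
  | zero => rw [zpow_zero, (of).map_one, hδ.map_one hε]
  | succ p ih => rw [hδ.map_of_zpow_add_one hε, ih, hg, mul_zero, add_zero]
  | pred p ih =>
    have h := hδ.map_of_zpow_add_one hε g (-p - 1)
    rwa [sub_add_cancel, ih, hg, mul_zero, add_zero, eq_comm] at h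

theorem map_map_of_zpow_eq_zero (hε : ∀ g, ε (of g) = 1) (hδ : IsFreeDerivative ε δ)
    (hδ' : IsFreeDerivative ε δ') {g : G} (hg : δ' (of g) = 0) (hδg : δ' (δ (of g)) = 0)
    (k : ℤ) : δ' (δ (of (g ^ k))) = 0 := by
  have step (p : ℤ) : δ' (δ (of (g ^ (p + 1)))) = δ' (δ (of (g ^ p))) := by
    rw [hδ.map_of_zpow_add_one hε, map_add, hδ', hδ'.map_of_zpow_eq_zero hε hg, hδg,
      smul_zero, mul_zero, add_zero, add_zero]
  induction k using Int.induction_on with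
  | zero => rw [zpow_zero, (of).map_one, hδ.map_one hε, map_zero]
  | succ p ih => rw [step, ih]
  | pred p ih => rwa [← step, sub_add_cancel]

theorem map_of_prod_take (hε : ∀ g, ε (of g) = 1) (hδ : IsFreeDerivative ε δ) {n : ℕ}
    (u : Fin n → G) {v : ℕ} (hv : v ≤ n) :
    δ (of ((List.ofFn u).take v).prod) =
      ∑ i ∈ univ.filter (fun i : Fin n => i.val < v),
        of ((List.ofFn u).take i).prod * δ (of (u i)) := by
  induction v with
  | zero => simpa [MonoidAlgebra.one_def] using hδ.map_one hε
  | succ v ih =>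
    have hvn : v < n := hv
    have hfilter : univ.filter (fun i : Fin n => i.val < v + 1) =
        insert ⟨v, hvn⟩ (univ.filter (fun i : Fin n => i.val < v)) := by
      ext i
      simp only [Order.lt_add_one_iff, mem_filter, mem_univ, true_and, mem_insert, Fin.ext_iff]
      omega
    rw [hfilter, sum_insert (by simp), List.prod_take_succ _ _ (by simpa using hvn), map_mul,
      hδ, hε, one_smul, ih hvn.le, add_comm, List.getElem_ofFn]

theorem foldr_drop_finRange_comp_apply_of_prod (hε : ∀ g, ε (of g) = 1) {n : ℕ}
    {δ : Fin n → MonoidAlgebra ℤ G →ₗ[ℤ] MonoidAlgebra ℤ G} (hδ : ∀ i, IsFreeDerivative ε (δ i))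
    (u : Fin n → G)
    (hδδ : ∀ (j : ℕ) (hj : j + 1 < n) (i : Fin n),
      δ ⟨j, by omega⟩ (δ ⟨j + 1, hj⟩ (of (u i))) = 0)
    {k : ℕ} (hk : 0 < k) {j : ℕ} (hjk : j + k = n) :
    (((List.finRange n).drop j).foldr (fun i f => (δ i).comp f) LinearMap.id)
        (of (List.ofFn u).prod)
      = ∑ ι ∈ univ.filter (fun ι : Fin k → Fin n => StrictMono ι),
          (∏ t ∈ univ.filter (fun t : Fin k => 0 < t.val),
              ε (δ ⟨j + t.val, by omega⟩ (of (u (ι t)))))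
            • (of ((List.ofFn u).take (ι ⟨0, hk⟩)).prod
                * δ ⟨j, by omega⟩ (of (u (ι ⟨0, hk⟩)))) := by
  induction k, hk using Nat.le_induction generalizing j with
  | base =>
    have hprod : (List.ofFn u).prod = ((List.ofFn u).take n).prod := by
      rw [List.take_of_length_le (List.length_ofFn (f := u)).le]
    rw [List.drop_finRange_eq_cons (by omega), show j + 1 = n by omega,
      List.drop_eq_nil_of_le (by simp), List.foldr_cons, List.foldr_nil, LinearMap.comp_apply,
      LinearMap.id_apply, hprod, (hδ _).map_of_prod_take hε u le_rfl,
      filter_true_of_mem fun i _ => i.isLt,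
      filter_true_of_mem fun ι _ => Subsingleton.strictMono ι]
    refine Fintype.sum_equiv (Equiv.funUnique (Fin 1) (Fin n)).symm _ _ fun i => ?_
    simp
  | succ k hk ih =>
    have hterm (ι : Fin k → Fin n) :
        δ ⟨j, by omega⟩ ((∏ t ∈ univ.filter (fun t : Fin k => 0 < t.val),
            ε (δ ⟨j + 1 + t.val, by omega⟩ (of (u (ι t))))) •
          (of ((List.ofFn u).take (ι ⟨0, hk⟩)).prod
            * δ ⟨j + 1, by omega⟩ (of (u (ι ⟨0, hk⟩)))))
        = ∑ i ∈ univ.filter (fun i : Fin n => i.val < (ι ⟨0, hk⟩).val),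
            (∏ t, ε (δ ⟨j + 1 + t.val, by omega⟩ (of (u (ι t))))) •
              (of ((List.ofFn u).take i).prod * δ ⟨j, by omega⟩ (of (u i))) := by
      rw [map_zsmul, hδ, hδδ j (by omega), mul_zero, add_zero,
        (hδ _).map_of_prod_take hε u (ι _).isLt.le, smul_sum, smul_sum]
      simp only [smul_smul]
      exact sum_congr rfl fun i _ => congrArg (· • _) (Fin.prod_filter_val_pos_mul_apply_zero hk
        (fun t => ε (δ ⟨j + 1 + t.val, by omega⟩ (of (u (ι t))))))
    rw [List.drop_finRange_eq_cons (by omega), List.foldr_cons, LinearMap.comp_apply,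
      ih (by omega), map_sum, sum_congr rfl fun ι _ => hterm ι,
      ← Fin.sum_filter_strictMono_succ hk]
    refine sum_congr rfl fun ι _ => ?_
    rw [Fin.prod_filter_val_pos_eq_prod_succ]
    congr 1
    refine prod_congr rfl fun t _ => ?_
    congr 3
    simp only [Fin.ext_iff, Fin.val_succ]
    omega

end IsFreeDerivative

end

theorem FreeGroup.freeDerivative_comp_of_zpow_eq_zero {S : Type*}
    {ε : MonoidAlgebra ℤ (FreeGroup S) →ₗ[ℤ] ℤ}
    (hε : ∀ g, ε (MonoidAlgebra.of ℤ (FreeGroup S) g) = 1)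
    {D : S → MonoidAlgebra ℤ (FreeGroup S) →ₗ[ℤ] MonoidAlgebra ℤ (FreeGroup S)}
    (hD : ∀ s, IsFreeDerivative ε (D s))
    (hD1 : ∀ s, D s (MonoidAlgebra.of ℤ (FreeGroup S) (FreeGroup.of s)) = 1)
    (hD0 : ∀ s s', s' ≠ s → D s (MonoidAlgebra.of ℤ (FreeGroup S) (FreeGroup.of s')) = 0)
    {a b : S} (hab : a ≠ b) (t : S) (k : ℤ) :
    D a (D b (MonoidAlgebra.of ℤ (FreeGroup S) (FreeGroup.of t ^ k))) = 0 := by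
  by_cases htb : t = b
  · subst htb
    exact (hD t).map_map_of_zpow_eq_zero hε (hD a) (hD0 a t hab.symm)
      (by rw [hD1, (hD a).map_one hε]) k
  · rw [(hD b).map_of_zpow_eq_zero hε (hD0 b t htb) k, map_zero]

end

/-- With `F`, `ε`, and the free derivatives `D_s` as usual, let `n ≥ 1`,
let `s_1, …, s_n ∈ S` (here `s 0, …, s (n-1)`) satisfy `s_i ≠ s_{i+1}`, let
`m_1, …, m_n` be nonzero integers, set `u_i = s_i^{m_i}` and `w = u_1 u_2 ⋯ u_n`.  Then for
every `j` with `1 ≤ j ≤ n` (here `0 ≤ j < n`),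
`D_{s_j}(D_{s_{j+1}}(⋯(D_{s_n}(w))⋯))` equals the sum over all strictly increasing tuples
`1 ≤ i_j < i_{j+1} < ⋯ < i_n ≤ n` (here strictly monotone `ι : Fin (n-j) → Fin n`) of
`(u_1 ⋯ u_{i_j − 1}) · D_{s_j}(u_{i_j}) · ε(D_{s_{j+1}}(u_{i_{j+1}})) ⋯ ε(D_{s_n}(u_{i_n}))`. -/
theorem freeDerivative_chain_eq_sum {S : Type*}
    (ε : MonoidAlgebra ℤ (FreeGroup S) →ₗ[ℤ] ℤ)
    (hε : ∀ g : FreeGroup S, ε (MonoidAlgebra.of ℤ (FreeGroup S) g) = 1)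
    (D : S → MonoidAlgebra ℤ (FreeGroup S) →ₗ[ℤ] MonoidAlgebra ℤ (FreeGroup S))
    (hD : ∀ s x y, D s (x * y) = ε y • D s x + x * D s y)
    (hD1 : ∀ s : S, D s (MonoidAlgebra.of ℤ (FreeGroup S) (FreeGroup.of s)) = 1)
    (hD0 : ∀ s s' : S, s' ≠ s → D s (MonoidAlgebra.of ℤ (FreeGroup S) (FreeGroup.of s')) = 0)
    (n : ℕ) (s : Fin n → S)
    (hs : ∀ (i : Fin n) (h : i.val + 1 < n), s i ≠ s ⟨i.val + 1, h⟩)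
    (m : Fin n → ℤ)
    (u : Fin n → FreeGroup S) (hu : ∀ i, u i = FreeGroup.of (s i) ^ m i)
    (w : FreeGroup S) (hw : w = (List.ofFn u).prod)
    (j : ℕ) (hj : j < n) :
    (((List.finRange n).drop j).foldr (fun i f => (D (s i)).comp f) LinearMap.id)
        (MonoidAlgebra.of ℤ (FreeGroup S) w)
      = ∑ ι ∈ Finset.univ.filter (fun ι : Fin (n - j) → Fin n => StrictMono ι),
          (∏ t ∈ Finset.univ.filter (fun t : Fin (n - j) => 0 < t.val),
              ε (D (s ⟨j + t.val, by omega⟩)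
                  (MonoidAlgebra.of ℤ (FreeGroup S) (u (ι t)))))
            • (MonoidAlgebra.of ℤ (FreeGroup S)
                  (((List.ofFn u).take (ι ⟨0, by omega⟩).val).prod)
                * D (s ⟨j, hj⟩)
                    (MonoidAlgebra.of ℤ (FreeGroup S) (u (ι ⟨0, by omega⟩)))) := by
  have hDD (i : ℕ) (hi : i + 1 < n) (k : Fin n) :
      D (s ⟨i, by omega⟩) (D (s ⟨i + 1, hi⟩) (MonoidAlgebra.of ℤ (FreeGroup S) (u k))) = 0 := by
    rw [hu]
    exact FreeGroup.freeDerivative_comp_of_zpow_eq_zero hε hD hD1 hD0 (hs ⟨i, by omega⟩ hi) _ _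
  subst hw
  exact IsFreeDerivative.foldr_drop_finRange_comp_apply_of_prod hε (δ := fun i => D (s i))
    (fun i => hD (s i)) u hDD (k := n - j) (by omega) (by omega)
end

section
/- Let g ≥ 2 and 1 ≤ g' < g, and let π_g = ⟨a_1, b_1, …, a_g, b_g | [a_1,b_1]⋯[a_g,b_g]⟩ be the fundamental group of the closed orientable surface of genus g. Set x = [a_1,b_1][a_2,b_2]⋯[a_{g'},b_{g'}] ∈ π_g. Then there exists a surjective group homomorphism ψ from π_g onto the dihedral group of order 8 such that ψ(x) ≠ 1. -/
open scoped commutatorElement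

/-- The single relator `[a_1,b_1][a_2,b_2]⋯[a_g,b_g]` of the genus `g` surface group,
where the generator `(i, false)` plays the role of `a_{i+1}` and `(i, true)` that of
`b_{i+1}`. -/
def surfaceRels (g : ℕ) : Set (FreeGroup (Fin g × Bool)) :=
  {(List.ofFn (fun i : Fin g =>
      ⁅FreeGroup.of (i, false), FreeGroup.of (i, true)⁆)).prod}

/-- The fundamental group of the closed orientable surface of genus `g`, presented as
`⟨a_1, b_1, …, a_g, b_g | [a_1,b_1][a_2,b_2]⋯[a_g,b_g]⟩`. -/
abbrev SurfaceGroup (g : ℕ) : Type :=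
  PresentedGroup (surfaceRels g)

/-- The generator `a_{i+1}` (if `c = false`) or `b_{i+1}` (if `c = true`) of the genus `g`
surface group. -/
def surfaceGen {g : ℕ} (i : Fin g) (c : Bool) : SurfaceGroup g :=
  PresentedGroup.of (i, c)

/-! Send `a_1` and `a_{g'+1}` to the reflection `sr 0`, `b_1` and `b_{g'+1}` to the rotation
`r 1`, and every other generator to `1`. The two nontrivial commutators both equal
`[sr 0, r 1] = r 2`, which has order two, so the relator maps to `r 2 ^ 2 = 1`, whereas `x`
contains only the first of them and maps to `r 2 ≠ 1`.
The image contains `sr 0` and `r 1`, which generate the dihedral group. -/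

namespace List

theorem prod_ofFn_pow {M : Type*} [Monoid M] (z : M) {n : ℕ} (e : Fin n → ℕ) :
    (ofFn fun i => z ^ e i).prod = z ^ ∑ i, e i := by
  induction n with
  | zero => simp
  | succ n ih => rw [ofFn_succ, prod_cons, ih, Fin.sum_univ_succ, pow_add]

end List

namespace SurfaceGroup

variable {g : ℕ} {G : Type*} [Group G]

def lift (f : Fin g × Bool → G)
    (hf : (List.ofFn fun i => ⁅f (i, false), f (i, true)⁆).prod = 1) : SurfaceGroup g →* G :=
  PresentedGroup.toGroup (by
    rintro _ rfl
    simpa [map_list_prod, List.map_ofFn, Function.comp_def] using hf)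

@[simp]
theorem lift_surfaceGen (f : Fin g × Bool → G)
    (hf : (List.ofFn fun i => ⁅f (i, false), f (i, true)⁆).prod = 1) (i : Fin g) (c : Bool) :
    lift f hf (surfaceGen i c) = f (i, c) :=
  PresentedGroup.toGroup.of _

theorem lift_prod_commutators (f : Fin g × Bool → G)
    (hf : (List.ofFn fun i => ⁅f (i, false), f (i, true)⁆).prod = 1) {g' : ℕ} (h : g' ≤ g) :
    lift f hf (List.ofFn fun i : Fin g' =>
        ⁅surfaceGen (Fin.castLE h i) false, surfaceGen (Fin.castLE h i) true⁆).prod =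
      (List.ofFn fun i : Fin g' =>
        ⁅f (Fin.castLE h i, false), f (Fin.castLE h i, true)⁆).prod := by
  simp [map_list_prod, List.map_ofFn, Function.comp_def]

end SurfaceGroup

namespace DihedralGroup

theorem surjective_of_mem_range {n : ℕ} {G : Type*} [Group G] (φ : G →* DihedralGroup n)
    (hs : sr 0 ∈ φ.range) (hr : r 1 ∈ φ.range) : Function.Surjective φ := by
  obtain ⟨s, hs⟩ := hs
  obtain ⟨t, ht⟩ := hr
  rintro (k | k)
  · exact ⟨t ^ (k.cast : ℤ), by rw [map_zpow, ht, r_one_zpow, ZMod.intCast_zmod_cast]⟩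
  · exact ⟨s * t ^ (k.cast : ℤ), by
      rw [map_mul, map_zpow, hs, ht, r_one_zpow, sr_mul_r, zero_add, ZMod.intCast_zmod_cast]⟩

theorem commutator_sr_zero_r_one : ⁅(sr 0 : DihedralGroup 4), (r 1 : DihedralGroup 4)⁆ = r 2 := by
  decide

end DihedralGroup

open DihedralGroup

def dihedralGens {g : ℕ} (i₀ i₁ : Fin g) (p : Fin g × Bool) : DihedralGroup 4 :=
  if p.1 = i₀ ∨ p.1 = i₁ then cond p.2 (r 1) (sr 0) else 1

theorem commutator_dihedralGens {g : ℕ} (i₀ i₁ i : Fin g) :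
    ⁅dihedralGens i₀ i₁ (i, false), dihedralGens i₀ i₁ (i, true)⁆ =
      r 2 ^ (if i = i₀ ∨ i = i₁ then 1 else 0) := by
  unfold dihedralGens
  split_ifs <;> simp [commutator_sr_zero_r_one]

theorem prod_commutators_dihedralGens {g : ℕ} {i₀ i₁ : Fin g} (hne : i₀ ≠ i₁) :
    (List.ofFn fun i => ⁅dihedralGens i₀ i₁ (i, false), dihedralGens i₀ i₁ (i, true)⁆).prod =
      1 := by
  simp_rw [commutator_dihedralGens, List.prod_ofFn_pow, Finset.sum_boole, Finset.filter_or,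
    Finset.filter_eq', Finset.mem_univ, if_true, ← Finset.insert_eq, Finset.card_pair hne,
    Nat.cast_id]
  decide

theorem prod_commutators_castLE_dihedralGens {g g' : ℕ} (h : g' ≤ g) (j : Fin g') {i₁ : Fin g}
    (hi₁ : g' ≤ i₁) :
    (List.ofFn fun i : Fin g' => ⁅dihedralGens (Fin.castLE h j) i₁ (Fin.castLE h i, false),
      dihedralGens (Fin.castLE h j) i₁ (Fin.castLE h i, true)⁆).prod = r 2 := by
  have hcond (i : Fin g') : Fin.castLE h i = Fin.castLE h j ∨ Fin.castLE h i = i₁ ↔ i = j := by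
    simp only [Fin.ext_iff, Fin.val_castLE]; omega
  simp_rw [commutator_dihedralGens, hcond, List.prod_ofFn_pow, Finset.sum_ite_eq',
    Finset.mem_univ, if_true, pow_one]

theorem exists_dihedral_quotient_surfaceGroup_general (g g' : ℕ)
    (hg'1 : 1 ≤ g') (hg' : g' < g) :
    ∃ ψ : SurfaceGroup g →* DihedralGroup 4,
      Function.Surjective ψ ∧
      ψ ((List.ofFn (fun i : Fin g' =>
          ⁅surfaceGen (Fin.castLE hg'.le i) false,
            surfaceGen (Fin.castLE hg'.le i) true⁆)).prod) ≠ 1 := by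
  have hne : Fin.castLE hg'.le ⟨0, hg'1⟩ ≠ ⟨g', hg'⟩ := by simp [Fin.ext_iff]; omega
  set ψ := SurfaceGroup.lift _ (prod_commutators_dihedralGens hne)
  refine ⟨ψ, surjective_of_mem_range ψ ⟨surfaceGen (Fin.castLE hg'.le ⟨0, hg'1⟩) false, ?_⟩
    ⟨surfaceGen (Fin.castLE hg'.le ⟨0, hg'1⟩) true, ?_⟩, ?_⟩
  · simp [ψ, dihedralGens]
  · simp [ψ, dihedralGens]
  · rw [SurfaceGroup.lift_prod_commutators,
      prod_commutators_castLE_dihedralGens hg'.le ⟨0, hg'1⟩ (i₁ := ⟨g', hg'⟩) le_rfl]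
    decide

/-- Let `g ≥ 2` and `1 ≤ g' < g`, and let `π_g` be the genus `g` surface
group.  Set `x = [a_1,b_1][a_2,b_2]⋯[a_{g'},b_{g'}] ∈ π_g`.  Then there is a surjective
homomorphism `ψ` from `π_g` onto the dihedral group of order `8` (`DihedralGroup 4`) with
`ψ(x) ≠ 1`. -/
theorem exists_dihedral_quotient_surfaceGroup (g g' : ℕ) (hg : 2 ≤ g)
    (hg'1 : 1 ≤ g') (hg' : g' < g) :
    ∃ ψ : SurfaceGroup g →* DihedralGroup 4,
      Function.Surjective ψ ∧
      ψ ((List.ofFn (fun i : Fin g' =>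
          ⁅surfaceGen (Fin.castLE hg'.le i) false,
            surfaceGen (Fin.castLE hg'.le i) true⁆)).prod) ≠ 1 :=
  exists_dihedral_quotient_surfaceGroup_general g g' hg'1 hg'
end

section
/- Let F be the free group on a set S, let g' ≥ 1, and let α_1, β_1, …, α_{g'}, β_{g'} be 2g' pairwise distinct elements of S. Then the element [α_1,β_1][α_2,β_2]⋯[α_{g'},β_{g'}] does not lie in the third term γ_3(F) of the lower central series of F; in particular it is not the identity. -/
open scoped commutatorElement

/-!
Every homomorphism maps `γ₃` into `γ₃`, and `γ₃` of a group of nilpotency class at most two,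
such as the quaternion group `Q₈`, is trivial. Since `α₁, β₁, …, β_{g'}` are distinct free
generators, there is a homomorphism `F → Q₈` sending `α₁ ↦ a`, `β₁ ↦ xa` and every other
generator to `1`; it maps the product of commutators to `⁅a, xa⁆ = a²`, which is not `1`.
-/

namespace Subgroup

variable {G H : Type*} [Group G] [Group H]

theorem top_lowerCentralSeries_two_eq_bot (h : ∀ x y : G, ⁅x, y⁆ ∈ center G) :
    (⊤ : Subgroup G).lowerCentralSeries 2 = ⊥ :=
  lowerCentralSeries_succ_eq_bot _ (commutator_le.mpr fun x _ y _ => h x y)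

theorem map_mem_top_lowerCentralSeries (f : G →* H) {g : G} {n : ℕ}
    (hg : g ∈ (⊤ : Subgroup G).lowerCentralSeries n) :
    f g ∈ (⊤ : Subgroup H).lowerCentralSeries n := by
  have := mem_map_of_mem f hg
  rw [map_lowerCentralSeries] at this
  exact lowerCentralSeries_mono n le_top this

theorem notMem_top_lowerCentralSeries_two_of_map_ne_one
    (hH : ∀ x y : H, ⁅x, y⁆ ∈ center H) (f : G →* H) {g : G} (hg : f g ≠ 1) :
    g ∉ (⊤ : Subgroup G).lowerCentralSeries 2 := fun hmem => by
  have := map_mem_top_lowerCentralSeries f hmem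
  rw [top_lowerCentralSeries_two_eq_bot hH, mem_bot] at this
  exact hg this

end Subgroup

namespace QuaternionGroup

theorem commutator_mem_center (x y : QuaternionGroup 2) : ⁅x, y⁆ ∈ Subgroup.center _ := by
  rw [Subgroup.mem_center_iff]
  revert x y
  decide

theorem commutator_a_one_xa_zero_ne_one :
    ⁅(a 1 : QuaternionGroup 2), (xa 0 : QuaternionGroup 2)⁆ ≠ 1 := by
  decide

end QuaternionGroup

theorem List.prod_ofFn_commutator_mulSingle_zero {G : Type*} [Group G] (n : ℕ) (x y : G) :
    (List.ofFn fun i =>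
      ⁅(Pi.mulSingle 0 x : Fin (n + 1) → G) i, (Pi.mulSingle 0 y : Fin (n + 1) → G) i⁆).prod =
      ⁅x, y⁆ := by
  simp [List.ofFn_succ, Fin.succ_ne_zero]

theorem FreeGroup.exists_map_prod_ofFn_commutator {S G : Type*} [Group G] {m : ℕ}
    {α β : Fin m → S} (hdist : Function.Injective (Sum.elim α β)) (a b : Fin m → G) :
    ∃ f : FreeGroup S →* G, f (List.ofFn fun i => ⁅of (α i), of (β i)⁆).prod =
      (List.ofFn fun i => ⁅a i, b i⁆).prod := by
  refine ⟨lift (Function.extend (Sum.elim α β) (Sum.elim a b) 1), ?_⟩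
  rw [map_list_prod, List.map_ofFn]
  refine congrArg (fun l => (List.ofFn l).prod) (funext fun i => ?_)
  have hα := hdist.extend_apply (Sum.elim a b) 1 (Sum.inl i)
  have hβ := hdist.extend_apply (Sum.elim a b) 1 (Sum.inr i)
  simp only [Sum.elim_inl, Sum.elim_inr] at hα hβ
  simp [map_commutatorElement, hα, hβ]

/-- Let `F` be the free group on a set `S`, let `g' ≥ 1`, and let
`α_1, β_1, …, α_{g'}, β_{g'}` be `2g'` pairwise distinct elements of `S` (encoded by the
injectivity of `Sum.elim α β`).  Then `[α_1,β_1][α_2,β_2]⋯[α_{g'},β_{g'}]` does not lie in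
the third term `γ_3(F)` of the lower central series (Mathlib's `lowerCentralSeries F 2`);
in particular it is not the identity. -/
theorem commutator_product_not_in_gamma3_free {S : Type*} (g' : ℕ) (hg' : 1 ≤ g')
    (α β : Fin g' → S) (hdist : Function.Injective (Sum.elim α β)) :
    (List.ofFn (fun i : Fin g' =>
        ⁅FreeGroup.of (α i), FreeGroup.of (β i)⁆)).prod
      ∉ (⊤ : Subgroup (FreeGroup S)).lowerCentralSeries 2 := by
  obtain ⟨n, rfl⟩ := Nat.exists_eq_add_of_le' hg'
  obtain ⟨f, hf⟩ := FreeGroup.exists_map_prod_ofFn_commutator hdist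
    (Pi.mulSingle 0 (QuaternionGroup.a 1 : QuaternionGroup 2))
    (Pi.mulSingle 0 (QuaternionGroup.xa 0))
  refine Subgroup.notMem_top_lowerCentralSeries_two_of_map_ne_one
    QuaternionGroup.commutator_mem_center f ?_
  rw [hf, List.prod_ofFn_commutator_mulSingle_zero]
  exact QuaternionGroup.commutator_a_one_xa_zero_ne_one
end
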